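/- arXiv:0710.0349 — 8 statements merged into one kernel-verified Lean document; each statement's English description precedes it below -/
import Mathlib

section
/- For a permutation σ of {1,...,n}, the rational function f_σ(u_1,...,u_n) = 1/(u_{σ(1)}(u_{σ(1)}+u_{σ(2)})···(u_{σ(1)}+···+u_{σ(n)})) satisfies: the product f_σ · f_τ (with τ a permutation of {1,...,m} whose variables are shifted to u_{n+1},...,u_{n+m}) equals the sum of f_ρ over all permutations ρ in the shuffle of σ and the shifted τ. -/
open Finset

/-- The "permutational mould" `f_σ(u_1,…,u_n) = ∏_k 1/(u_{σ(1)}+⋯+u_{σ(k)})`. -/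
noncomputable def mouldF {K : Type*} [Field K] {n : ℕ} (σ : Equiv.Perm (Fin n))
    (u : Fin n → K) : K :=
  ∏ k : Fin n, (∑ j ∈ Finset.Iic k, u (σ j))⁻¹

/-- `ρ` is a shuffle of the word `σ(1)…σ(n)` and the word `τ(1)+n,…,τ(m)+n`:
the values `< n` appear in `ρ` in the relative order of the word of `σ`,
and the values `≥ n` in the relative order of the shifted word of `τ`. -/
def IsShuffleOf {n m : ℕ} (σ : Equiv.Perm (Fin n)) (τ : Equiv.Perm (Fin m))
    (ρ : Equiv.Perm (Fin (n + m))) : Prop :=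
  (∀ i j : Fin n, i < j →
      ρ⁻¹ (Fin.castAdd m (σ i)) < ρ⁻¹ (Fin.castAdd m (σ j))) ∧
  (∀ i j : Fin m, i < j →
      ρ⁻¹ (Fin.natAdd n (τ i)) < ρ⁻¹ (Fin.natAdd n (τ j)))

/-- Product formula for permutational moulds: `f_σ · f_τ(shifted)` is the sum of
`f_ρ` over all shuffles `ρ` of `σ` and the shifted `τ`, in the field of rational
functions in the variables `u_1,…,u_{n+m}`. -/
instance {n m : ℕ} (σ : Equiv.Perm (Fin n)) (τ : Equiv.Perm (Fin m)) :
    DecidablePred (IsShuffleOf σ τ) := fun ρ => by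
  unfold IsShuffleOf; infer_instance

/-! The last letter of a shuffle of two words is the last letter of one of them. Removing it and
using the partial fraction `1 / (A * B) = 1 / (A + B) * (1 / A + 1 / B)`, where `A` and `B` are
the total weights of the two words, gives `f_σ f_τ = ∑ f_ρ` by induction on the total length, as an
identity between words. Distinct shuffles of the words of `σ` and of the shifted `τ` are the words
of distinct permutations, namely those satisfying `IsShuffleOf σ τ`. The denominators do not vanish
because a nonempty sum of the variables `X i` takes the value of its length at `(1, …, 1)`. -/

namespace List

variable {α : Type*}

def shuffles : List α → List α → List (List α)
  | [], b => [b]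
  | a :: as, [] => [a :: as]
  | x :: as, y :: bs =>
      (shuffles as (y :: bs)).map (x :: ·) ++ (shuffles (x :: as) bs).map (y :: ·)

theorem perm_append_of_mem_shuffles {a b c : List α} (h : c ∈ shuffles a b) : c ~ a ++ b := by
  induction a, b using shuffles.induct generalizing c with
  | case1 b => simp_all [shuffles]
  | case2 x as => simp_all [shuffles]
  | case3 x as y bs ih₁ ih₂ =>
    simp only [shuffles, mem_append, mem_map] at h
    rcases h with ⟨c, hc, rfl⟩ | ⟨c, hc, rfl⟩
    · exact (ih₁ hc).cons x
    · exact ((ih₂ hc).cons y).trans perm_middle.symm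

theorem sublist_of_mem_shuffles_left {a b c : List α} (h : c ∈ shuffles a b) : a <+ c := by
  induction a, b using shuffles.induct generalizing c with
  | case1 b => simp
  | case2 x as => simp_all [shuffles]
  | case3 x as y bs ih₁ ih₂ =>
    simp only [shuffles, mem_append, mem_map] at h
    rcases h with ⟨c, hc, rfl⟩ | ⟨c, hc, rfl⟩
    · exact (ih₁ hc).cons_cons x
    · exact (ih₂ hc).cons y

theorem sublist_of_mem_shuffles_right {a b c : List α} (h : c ∈ shuffles a b) : b <+ c := by
  induction a, b using shuffles.induct generalizing c with
  | case1 b => simp_all [shuffles]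
  | case2 x as => simp
  | case3 x as y bs ih₁ ih₂ =>
    simp only [shuffles, mem_append, mem_map] at h
    rcases h with ⟨c, hc, rfl⟩ | ⟨c, hc, rfl⟩
    · exact (ih₁ hc).cons x
    · exact (ih₂ hc).cons_cons y

theorem nodup_shuffles {a b : List α} (h : a.Disjoint b) : (shuffles a b).Nodup := by
  induction a, b using shuffles.induct with
  | case1 b => simp [shuffles]
  | case2 x as => simp [shuffles]
  | case3 x as y bs ih₁ ih₂ =>
    have hxy : x ≠ y := fun hxy => h mem_cons_self (hxy ▸ mem_cons_self)
    rw [shuffles]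
    refine Nodup.append ((ih₁ (disjoint_cons_left.mp h).2).map cons_injective)
      ((ih₂ (disjoint_cons_right.mp h).2).map cons_injective) ?_
    simp only [List.Disjoint, mem_map]
    rintro _ ⟨c, -, rfl⟩ ⟨d, -, hd⟩
    exact hxy (cons_eq_cons.mp hd).1.symm

theorem mem_shuffles_of_sublist {a b c : List α} (hab : (a ++ b).Nodup) (hc : c ~ a ++ b)
    (ha : a <+ c) (hb : b <+ c) : c ∈ shuffles a b := by
  induction c generalizing a b with
  | nil => obtain ⟨rfl, rfl⟩ := append_eq_nil_iff.mp hc.symm.eq_nil; simp [shuffles]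
  | cons z c ih =>
    match a, b with
    | [], b => simp [shuffles, hb.eq_of_length (by simpa using hc.length_eq.symm)]
    | x :: as, [] => simp [shuffles, ha.eq_of_length (by simpa using hc.length_eq.symm)]
    | x :: as, y :: bs =>
      have hzc : z ∉ c := (nodup_cons.mp (hc.nodup_iff.mpr hab)).1
      have hdisj := (nodup_append.mp hab).2.2
      rcases mem_append.mp (hc.subset mem_cons_self) with hz | hz
      · obtain rfl : x = z := by
          by_contra hne; exact hzc ((ha.of_cons_of_ne hne).subset hz)
        have hxb : x ∉ y :: bs := fun h => hdisj x hz x h rfl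
        have hc' : c ∈ shuffles as (y :: bs) :=
          ih (hab.sublist (sublist_cons_self x _)) ((perm_cons x).mp hc)
            (cons_sublist_cons.mp ha) ((sublist_cons_iff.mp hb).resolve_right ?_)
        · simp [shuffles, hc']
        · rintro ⟨r, hr, -⟩; exact hxb (hr ▸ mem_cons_self)
      · obtain rfl : y = z := by
          by_contra hne; exact hzc ((hb.of_cons_of_ne hne).subset hz)
        have hya : y ∉ x :: as := fun h => hdisj y h y hz rfl
        have hc' : c ∈ shuffles (x :: as) bs :=
          ih (hab.sublist ((sublist_cons_self y bs).append_left _))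
            ((perm_cons y).mp (hc.trans perm_middle))
            ((sublist_cons_iff.mp ha).resolve_right ?_) (cons_sublist_cons.mp hb)
        · simp [shuffles, hc']
        · rintro ⟨r, hr, -⟩; exact hya (hr ▸ mem_cons_self)

theorem mem_shuffles_iff {a b c : List α} (hab : (a ++ b).Nodup) (hc : c ~ a ++ b) :
    c ∈ shuffles a b ↔ a <+ c ∧ b <+ c :=
  ⟨fun h => ⟨sublist_of_mem_shuffles_left h, sublist_of_mem_shuffles_right h⟩,
    fun h => mem_shuffles_of_sublist hab hc h.1 h.2⟩

variable {K : Type*} [Field K]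

/-- `mould u l` is the product, over the nonempty suffixes `s` of `l`, of `(∑ x ∈ s, u x)⁻¹`.
It is `mouldF` read on reversed words (`mould_reverse_ofFn`), so that removing the last letter of
a word becomes `List.cons`, the recursion of `shuffles`. -/
def mould (u : α → K) : List α → K
  | [] => 1
  | x :: l => ((x :: l).map u).sum⁻¹ * mould u l

theorem mould_mul_mould {u : α → K} (hu : ∀ l : List α, l ≠ [] → (l.map u).sum ≠ 0)
    (a b : List α) : mould u a * mould u b = ((shuffles a b).map (mould u)).sum := by
  induction a, b using shuffles.induct with
  | case1 b => simp [shuffles, mould]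
  | case2 x as => simp [shuffles, mould]
  | case3 x as y bs ih₁ ih₂ =>
    set A := ((x :: as).map u).sum
    set B := ((y :: bs).map u).sum
    have hA : A ≠ 0 := hu _ (cons_ne_nil _ _)
    have hB : B ≠ 0 := hu _ (cons_ne_nil _ _)
    have hAB : A + B ≠ 0 := by
      simpa only [map_append, sum_append] using hu (x :: as ++ y :: bs) (cons_ne_nil _ _)
    -- Every shuffle of `x :: as` and `y :: bs` has total weight `A + B`, and
    -- `A⁻¹ * B⁻¹ = (A + B)⁻¹ * (A⁻¹ + B⁻¹)` splits by the first letter.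
    have hcons : ∀ z c, z :: c ∈ shuffles (x :: as) (y :: bs) →
        mould u (z :: c) = (A + B)⁻¹ * mould u c := by
      intro z c h
      rw [mould, ((perm_append_of_mem_shuffles h).map u).sum_eq, map_append, sum_append]
    have h₁ : ((shuffles as (y :: bs)).map (x :: ·)).map (mould u) =
        (shuffles as (y :: bs)).map fun c => (A + B)⁻¹ * mould u c := by
      rw [map_map]; exact map_congr_left fun c hc => hcons x c (by simp [shuffles, hc])
    have h₂ : ((shuffles (x :: as) bs).map (y :: ·)).map (mould u) =
        (shuffles (x :: as) bs).map fun c => (A + B)⁻¹ * mould u c := by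
      rw [map_map]; exact map_congr_left fun c hc => hcons y c (by simp [shuffles, hc])
    rw [shuffles, map_append, sum_append, h₁, h₂, sum_map_mul_left, sum_map_mul_left, ← ih₁, ← ih₂,
      show mould u (x :: as) = A⁻¹ * mould u as from rfl,
      show mould u (y :: bs) = B⁻¹ * mould u bs from rfl]
    field_simp

theorem mould_reverse_ofFn (u : α → K) {N : ℕ} (p : Fin N → α) :
    mould u (ofFn p).reverse = ∏ k, (∑ j ∈ Finset.Iic k, u (p j))⁻¹ := by
  induction N with
  | zero => simp [mould]
  | succ N ih =>
    rw [ofFn_succ_last, reverse_append, reverse_singleton, singleton_append, mould,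
      ih, Fin.prod_univ_castSucc, mul_comm]
    simp only [Fin.sum_Iic_castSucc]
    rw [← Fin.top_eq_last, Finset.Iic_top, Fin.sum_univ_castSucc, map_cons, sum_cons, map_reverse,
      sum_reverse, map_ofFn, sum_ofFn, add_comm]
    rfl

theorem sublist_finRange_iff {N : ℕ} {l : List (Fin N)} : l <+ finRange N ↔ l.Pairwise (· < ·) :=
  ⟨fun h => (pairwise_lt_finRange N).sublist h, fun h =>
    sublist_of_subperm_of_pairwise (subperm_of_subset (h.imp ne_of_lt) fun x _ => mem_finRange x)
      h (pairwise_lt_finRange N)⟩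

theorem ofFn_sublist_ofFn_perm_iff {N k : ℕ} (ρ : Equiv.Perm (Fin N)) (p : Fin k → Fin N) :
    ofFn p <+ ofFn ρ ↔ ∀ i j, i < j → ρ⁻¹ (p i) < ρ⁻¹ (p j) := by
  have hρ : (ofFn ρ).map ⇑(ρ⁻¹ : Equiv.Perm (Fin N)) = finRange N := by
    simp [map_ofFn, ← ofFn_id]
  rw [← pairwise_ofFn (R := (· < ·)), ← sublist_finRange_iff, ← hρ,
    show (ofFn fun i => ρ⁻¹ (p i)) = (ofFn p).map ⇑ρ⁻¹ by simp [map_ofFn, Function.comp_def]]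
  refine ⟨fun h => h.map _, fun h => ?_⟩
  simpa [map_ofFn, Function.comp_def] using h.map ρ

theorem exists_perm_ofFn_eq {N : ℕ} {l : List (Fin N)} (hl : l ~ finRange N) :
    ∃ ρ : Equiv.Perm (Fin N), ofFn ρ = l := by
  have hlen : l.length = N := by simpa using hl.length_eq
  have hinj : Function.Injective fun i : Fin N => l[i.val] := fun i j h =>
    Fin.ext ((hl.nodup_iff.mpr (nodup_finRange _)).getElem_inj_iff.mp h)
  exact ⟨Equiv.ofBijective _ (Finite.injective_iff_bijective.mp hinj),
    ext_getElem (by simp [hlen]) fun _ _ _ => by simp⟩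

theorem sum_shuffles_eq_sum_perm {M : Type*} [AddCommMonoid M] {N : ℕ} {a b : List (Fin N)}
    (hab : a ++ b ~ finRange N) (g : List (Fin N) → M) :
    ((shuffles a b).map g).sum = ∑ ρ ∈ univ.filter (fun ρ : Equiv.Perm (Fin N) =>
      a.reverse <+ ofFn ρ ∧ b.reverse <+ ofFn ρ), g (ofFn ρ).reverse := by
  have hnd : (a ++ b).Nodup := hab.nodup_iff.mpr (nodup_finRange N)
  have hmem (ρ : Equiv.Perm (Fin N)) :
      (ofFn ρ).reverse ∈ shuffles a b ↔ a.reverse <+ ofFn ρ ∧ b.reverse <+ ofFn ρ := by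
    rw [mem_shuffles_iff hnd, sublist_reverse_iff, sublist_reverse_iff]
    exact (reverse_perm _).trans ((ofFn_eq_map ▸ ρ.map_finRange_perm).trans hab.symm)
  rw [← sum_toFinset _ (nodup_shuffles (disjoint_of_nodup_append hnd))]
  symm
  refine sum_nbij (fun ρ => (ofFn ρ).reverse) (fun ρ hρ => by simpa [hmem] using hρ)
    (fun ρ _ ρ' _ h => DFunLike.coe_injective (ofFn_injective (reverse_injective h)))
    (fun c hc => ?_) fun _ _ => rfl
  have hc : c ∈ shuffles a b := mem_toFinset.mp hc
  obtain ⟨ρ, hρ⟩ :=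
    exists_perm_ofFn_eq ((reverse_perm c).trans ((perm_append_of_mem_shuffles hc).trans hab))
  refine ⟨ρ, ?_, by simp [hρ]⟩
  simpa [← hmem, hρ] using hc

theorem ofFn_castAdd_append_ofFn_natAdd_perm {n m : ℕ} (σ : Equiv.Perm (Fin n))
    (τ : Equiv.Perm (Fin m)) :
    (ofFn fun i => Fin.castAdd m (σ i)) ++ (ofFn fun i => Fin.natAdd n (τ i)) ~
      finRange (n + m) := by
  let π : Equiv.Perm (Fin (n + m)) :=
    finSumFinEquiv.symm.trans ((σ.sumCongr τ).trans finSumFinEquiv)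
  have : ⇑π = Fin.append (fun i => Fin.castAdd m (σ i)) (fun i => Fin.natAdd n (τ i)) := by
    funext i
    induction i using Fin.addCases <;> simp [π]
  rw [← ofFn_fin_append, ← this, ofFn_eq_map]
  exact π.map_finRange_perm

end List

theorem MvPolynomial.sum_map_X_ne_zero {σ R : Type*} [CommSemiring R] [CharZero R] {l : List σ}
    (hl : l ≠ []) : (l.map X : List (MvPolynomial σ R)).sum ≠ 0 := by
  intro h
  have := congrArg (eval fun _ => (1 : R)) h
  simp [map_list_sum, Function.comp_def] at this
  exact hl this

section

open List

theorem mouldF_eq_mould {K α : Type*} [Field K] {N : ℕ} (σ : Equiv.Perm (Fin N)) (f : Fin N → α)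
    (u : α → K) : mouldF σ (fun i => u (f i)) = mould u (ofFn fun i => f (σ i)).reverse :=
  (mould_reverse_ofFn u _).symm

theorem mouldF_mul_mouldF {K : Type*} [Field K] {n m : ℕ} (σ : Equiv.Perm (Fin n))
    (τ : Equiv.Perm (Fin m)) {u : Fin (n + m) → K}
    (hu : ∀ l : List (Fin (n + m)), l ≠ [] → (l.map u).sum ≠ 0) :
    mouldF σ (fun i => u (Fin.castAdd m i)) * mouldF τ (fun i => u (Fin.natAdd n i)) =
      ∑ ρ ∈ Finset.univ.filter (IsShuffleOf σ τ), mouldF ρ u := by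
  set wσ := ofFn fun i => Fin.castAdd m (σ i)
  set wτ := ofFn fun i => Fin.natAdd n (τ i)
  have hperm : wσ.reverse ++ wτ.reverse ~ finRange (n + m) :=
    ((reverse_perm _).append (reverse_perm _)).trans (ofFn_castAdd_append_ofFn_natAdd_perm σ τ)
  have hshuffle (ρ : Equiv.Perm (Fin (n + m))) :
      wσ <+ ofFn ρ ∧ wτ <+ ofFn ρ ↔ IsShuffleOf σ τ ρ := by
    rw [ofFn_sublist_ofFn_perm_iff, ofFn_sublist_ofFn_perm_iff]; rfl
  calc mouldF σ (fun i => u (Fin.castAdd m i)) * mouldF τ (fun i => u (Fin.natAdd n i))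
      = mould u wσ.reverse * mould u wτ.reverse := by rw [mouldF_eq_mould, mouldF_eq_mould]
    _ = ((shuffles wσ.reverse wτ.reverse).map (mould u)).sum := mould_mul_mould hu _ _
    _ = ∑ ρ ∈ Finset.univ.filter (IsShuffleOf σ τ), mould u (ofFn ρ).reverse := by
      simp only [sum_shuffles_eq_sum_perm hperm, reverse_reverse, hshuffle]
    _ = _ := Finset.sum_congr rfl fun ρ _ => (mouldF_eq_mould ρ id u).symm

end

theorem mould_product_shuffle (n m : ℕ) (σ : Equiv.Perm (Fin n)) (τ : Equiv.Perm (Fin m)) :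
    letI F := FractionRing (MvPolynomial (Fin (n + m)) ℚ)
    letI u : Fin (n + m) → F :=
      fun i => algebraMap (MvPolynomial (Fin (n + m)) ℚ) F (MvPolynomial.X i)
    mouldF σ (fun i => u (Fin.castAdd m i)) * mouldF τ (fun i => u (Fin.natAdd n i)) =
      ∑ ρ ∈ Finset.univ.filter (fun ρ : Equiv.Perm (Fin (n + m)) => IsShuffleOf σ τ ρ),
        mouldF ρ u := by
  refine mouldF_mul_mouldF σ τ (u := fun i => algebraMap _ _ (MvPolynomial.X i)) fun l hl => ?_
  have hX := MvPolynomial.sum_map_X_ne_zero (R := ℚ) hl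
  rwa [← map_ne_zero_iff _
    (IsFractionRing.injective _ (FractionRing (MvPolynomial (Fin (n + m)) ℚ))),
    map_list_sum, List.map_map] at hX
end

section
/- The sum over all permutations σ of {1,...,n} of 1/(u_{σ(1)}(u_{σ(1)}+u_{σ(2)})···(u_{σ(1)}+···+u_{σ(n)})) equals 1/(u_1 u_2 ··· u_n). -/
open Finset

/-
The proof splits a permutation `σ` of `Fin (n + 1)` according to its last value `p = σ (last n)`.
The last factor of every term is `(∑ i, u i)⁻¹`, and the remaining factors form the same sum for
the `n` variables `u i`, `i ≠ p`, which by induction equals `∏_{i ≠ p} (u i)⁻¹ = u p * ∏ i, (u i)⁻¹`.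
Summing over `p` gives `(∑ p, u p) * (∏ i, (u i)⁻¹) * (∑ i, u i)⁻¹ = ∏ i, (u i)⁻¹`.
-/

namespace Equiv.Perm

/-- Like `decomposeFin`, but splitting off the value at `Fin.last n` instead of the value at `0`. -/
def decomposeFinLast {n : ℕ} : Fin (n + 1) × Perm (Fin n) ≃ Perm (Fin (n + 1)) :=
  decomposeFin.symm.trans (Equiv.mulRight (finRotate (n + 1)))

@[simp]
theorem decomposeFinLast_apply_castSucc {n : ℕ} (p : Fin (n + 1)) (e : Perm (Fin n)) (i : Fin n) :
    decomposeFinLast (p, e) i.castSucc = swap 0 p (e i).succ := by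
  simp [decomposeFinLast]

end Equiv.Perm

open Equiv Equiv.Perm

theorem Fin.prod_partialSum_succ {M N : Type*} [AddCommMonoid M] [CommMonoid N] {n : ℕ}
    (g : M → N) (v : Fin (n + 1) → M) :
    ∏ k, g (∑ j ∈ Iic k, v j) = (∏ k : Fin n, g (∑ j ∈ Iic k, v j.castSucc)) * g (∑ j, v j) := by
  rw [Fin.prod_univ_castSucc]
  simp [Fin.sum_Iic_castSucc, ← Fin.top_eq_last]

theorem Fin.mul_prod_swap_zero_succ {M : Type*} [CommMonoid M] {n : ℕ} (f : Fin (n + 1) → M)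
    (p : Fin (n + 1)) : f p * ∏ i : Fin n, f (swap 0 p i.succ) = ∏ i, f i := by
  rw [← Equiv.prod_comp (swap 0 p) f, Fin.prod_univ_succ, swap_apply_left]

/-- The sum over all permutations `σ` of `1/(u_{σ(1)}(u_{σ(1)}+u_{σ(2)})⋯(u_{σ(1)}+⋯+u_{σ(n)}))`
equals `1/(u_1 u_2 ⋯ u_n)`, in any field in which all the partial sums are nonzero. -/
theorem sum_perm_mould_eq {K : Type*} [Field K] (n : ℕ) (u : Fin n → K)
    (hne : ∀ (σ : Equiv.Perm (Fin n)) (k : Fin n), (∑ j ∈ Finset.Iic k, u (σ j)) ≠ 0) :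
    ∑ σ : Equiv.Perm (Fin n), ∏ k : Fin n, (∑ j ∈ Finset.Iic k, u (σ j))⁻¹ =
      ∏ i : Fin n, (u i)⁻¹ := by
  induction n with
  | zero => simp
  | succ n ih =>
    have hu (p : Fin (n + 1)) : u p ≠ 0 := by
      simpa [← bot_eq_zero] using hne (swap 0 p) 0
    have hT : ∑ i, u i ≠ 0 := by simpa [← Fin.top_eq_last] using hne 1 (Fin.last n)
    calc ∑ σ : Perm (Fin (n + 1)), ∏ k, (∑ j ∈ Iic k, u (σ j))⁻¹
        = ∑ p, (∑ e : Perm (Fin n), ∏ k, (∑ j ∈ Iic k, u (swap 0 p (e j).succ))⁻¹)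
            * (∑ i, u i)⁻¹ := by
          simp only [← decomposeFinLast.sum_comp, Fintype.sum_prod_type, sum_mul,
            Fin.prod_partialSum_succ, decomposeFinLast_apply_castSucc, Equiv.sum_comp]
      _ = ∑ p, u p * (∏ i, (u i)⁻¹) * (∑ i, u i)⁻¹ := by
          refine sum_congr rfl fun p _ => ?_
          have hrest := ih (fun i => u (swap 0 p i.succ)) fun e k => by
            simpa [Fin.sum_Iic_castSucc] using hne (decomposeFinLast (p, e)) k.castSucc
          rw [hrest, ← Fin.mul_prod_swap_zero_succ (fun i => (u i)⁻¹) p,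
            mul_inv_cancel_left₀ (hu p)]
      _ = ∏ i, (u i)⁻¹ := by
          rw [← sum_mul, ← sum_mul, mul_right_comm, mul_inv_cancel₀ hT, one_mul]
end

section
/- Let P be a finite poset on {1,...,n} such that the Hasse diagram of P is a forest and the set of elements weakly below any element is an interval of integers (a non-interleaving forest). Then ∏_{i=1}^n 1/(∑_{j ≤_P i} u_j) = ∑_{σ ∈ L(P)} ∏_{k=1}^n 1/(u_{σ(1)}+···+u_{σ(k)}), where L(P) is the set of linear extensions of P (read as words σ = σ(1)···σ(n) such that σ(a) ≤_P σ(b) implies a ≤ b). -/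
/-!
Removing a maximal element `m` from a forest `A` only removes the factor `(∑_{j ≤ m} u_j)⁻¹`
from the hook product `∏_{i ∈ A} (∑_{j ≤ i} u_j)⁻¹`, and since every element lies below exactly
one maximal element, the hook sums of the maximal elements add up to `∑_{j ∈ A} u_j`. So
`hook(A) = (∑_A u)⁻¹ ∑_{m maximal} hook(A \ m)`. Linear extensions of `A` are classified by their
last letter, which is maximal, and appending it multiplies the weight by `(∑_A u)⁻¹`, so the sum
over linear extensions satisfies the same recursion.
-/

open Finset

variable {α F : Type*} [Field F]

def prodInvPrefixSums (u : α → F) (l : List α) : F :=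
  ∏ k ∈ range l.length, ((l.take (k + 1)).map u).sum⁻¹

lemma prodInvPrefixSums_append_singleton (u : α → F) (l : List α) (a : α) :
    prodInvPrefixSums u (l ++ [a]) = prodInvPrefixSums u l * ((l ++ [a]).map u).sum⁻¹ := by
  rw [prodInvPrefixSums, List.length_append, List.length_singleton, prod_range_succ,
    List.take_of_length_le (by simp)]
  congr 1
  refine prod_congr rfl fun k hk => ?_
  rw [List.take_append_of_le_length (by simpa using hk)]

lemma prodInvPrefixSums_ofFn (u : α → F) {n : ℕ} (f : Fin n → α) :
    prodInvPrefixSums u (List.ofFn f) = ∏ k, (∑ j ∈ Iic k, u (f j))⁻¹ := by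
  rw [prodInvPrefixSums, List.length_ofFn, ← Fin.prod_univ_eq_prod_range]
  refine prod_congr rfl fun k _ => ?_
  rw [List.map_take, List.map_ofFn, List.sum_take_ofFn]
  congr 1
  refine sum_congr ?_ fun _ _ => rfl
  ext j
  simp only [mem_filter, mem_univ, true_and, mem_Iic, Fin.le_def]
  omega

lemma exists_equiv_ofFn_eq [Fintype α] [DecidableEq α] {n : ℕ} (hn : Fintype.card α = n)
    {l : List α} (hl : (l : Multiset α) = univ.val) : ∃ σ : Fin n ≃ α, List.ofFn σ = l := by
  have hlen : n = l.length := by rw [← hn, ← Multiset.coe_card, hl]; rfl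
  have hnodup : l.Nodup := by rw [← Multiset.coe_nodup, hl]; exact univ.nodup
  refine ⟨(finCongr hlen).trans (hnodup.getEquivOfForallMemList l fun a => ?_), ?_⟩
  · rw [← Multiset.mem_coe, hl]; exact mem_univ a
  · conv_rhs => rw [← List.ofFn_get l, List.ofFn_congr hlen.symm]
    rfl

section PartialOrder

variable [PartialOrder α]

lemma existsUnique_maximal_ge (hforest : ∀ i : α, IsChain (· ≤ ·) (Set.Ici i)) {A : Finset α}
    {j : α} (hj : j ∈ A) :
    ∃! m, Maximal (· ∈ A) m ∧ j ≤ m := by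
  obtain ⟨m, hjm, hm⟩ := A.exists_le_maximal hj
  refine ⟨m, ⟨hm, hjm⟩, fun m' ⟨hm', hjm'⟩ => ?_⟩
  rcases (hforest j).total hjm' hjm with h | h
  · exact hm'.eq_of_le hm.1 h
  · exact (hm.eq_of_le hm'.1 h).symm

variable [DecidableLE α]

def hookProd (u : α → F) (A : Finset α) : F := ∏ i ∈ A, (∑ j ∈ A with j ≤ i, u j)⁻¹

lemma hookProd_eq_inv_mul_hookProd_erase [DecidableEq α] (u : α → F) {A : Finset α} {m : α}
    (hm : Maximal (· ∈ A) m) :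
    hookProd u A = (∑ j ∈ A with j ≤ m, u j)⁻¹ * hookProd u (A.erase m) := by
  rw [hookProd, ← mul_prod_erase A _ hm.1, hookProd]
  congr 1
  refine prod_congr rfl fun i hi => ?_
  obtain ⟨him, hiA⟩ := mem_erase.1 hi
  rw [filter_erase, erase_eq_of_notMem]
  exact fun hmi => him (hm.eq_of_le hiA (mem_filter.1 hmi).2).symm

open scoped Classical in
lemma sum_maximal_sum_le (hforest : ∀ i : α, IsChain (· ≤ ·) (Set.Ici i)) {M : Type*}
    [AddCommMonoid M] (u : α → M) (A : Finset α) :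
    ∑ m ∈ A with Maximal (· ∈ A) m, ∑ j ∈ A with j ≤ m, u j = ∑ j ∈ A, u j := by
  rw [sum_comm' (t' := A) (s' := fun j => {m ∈ A | Maximal (· ∈ A) m ∧ j ≤ m})]
  · refine sum_congr rfl fun j hj => ?_
    obtain ⟨m, hm, hm_unique⟩ := existsUnique_maximal_ge hforest hj
    rw [eq_singleton_iff_unique_mem.2 ⟨mem_filter.2 ⟨hm.1.1, hm⟩,
      fun m' hm' => hm_unique m' (mem_filter.1 hm').2⟩, sum_singleton]
  · intro m j
    simp only [mem_filter]
    exact ⟨fun ⟨⟨hmA, hm⟩, hjA, hjm⟩ => ⟨⟨hmA, hm, hjm⟩, hjA⟩,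
      fun ⟨⟨hmA, hm, hjm⟩, hjA⟩ => ⟨⟨hmA, hm⟩, hjA, hjm⟩⟩

def linearExtensions [DecidableEq α] (A : Finset α) : Finset (List α) :=
  A.val.lists.toFinset.filter (List.Pairwise fun a b => ¬ b ≤ a)

section
variable [DecidableEq α] {A : Finset α} {l : List α}

lemma mem_linearExtensions :
    l ∈ linearExtensions A ↔ (l : Multiset α) = A.val ∧ l.Pairwise (fun a b => ¬ b ≤ a) := by
  rw [linearExtensions, mem_filter, Multiset.mem_toFinset, Multiset.mem_lists_iff, eq_comm]
  rfl

lemma sum_map_of_mem_linearExtensions {M : Type*} [AddCommMonoid M] (u : α → M)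
    (hl : l ∈ linearExtensions A) : (l.map u).sum = ∑ j ∈ A, u j := by
  rw [sum_eq_multiset_sum, ← (mem_linearExtensions.1 hl).1, Multiset.map_coe, Multiset.sum_coe]

@[simp]
lemma linearExtensions_empty : linearExtensions (∅ : Finset α) = {[]} := by
  ext l
  simp +contextual [mem_linearExtensions]

lemma append_singleton_mem_linearExtensions {m : α} :
    l ++ [m] ∈ linearExtensions A ↔ Maximal (· ∈ A) m ∧ l ∈ linearExtensions (A.erase m) := by
  have hcons : ((l ++ [m] : List α) : Multiset α) = m ::ₘ l :=
    Multiset.coe_eq_coe.2 (List.perm_append_singleton m l)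
  simp only [mem_linearExtensions, hcons, List.pairwise_append, List.pairwise_singleton,
    List.mem_singleton, forall_eq, true_and]
  constructor
  · rintro ⟨hA, hl, hm⟩
    have hmA : m ∈ A := by rw [← mem_val, ← hA]; exact Multiset.mem_cons_self _ _
    have hlA : (l : Multiset α) = (A.erase m).val := by
      rw [erase_val, ← hA, Multiset.erase_cons_head]
    refine ⟨⟨hmA, fun a ha hma => ?_⟩, hlA, hl⟩
    by_cases ham : a = m
    · exact ham ▸ le_rfl
    · exact absurd hma (hm a (by rw [← Multiset.mem_coe, hlA]; exact mem_erase.2 ⟨ham, ha⟩))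
  · rintro ⟨hmax, hlA, hl⟩
    refine ⟨by rw [hlA, erase_val, Multiset.cons_erase hmax.1], ⟨hl, ?_⟩⟩
    intro a ha hma
    obtain ⟨ham, haA⟩ := mem_erase.1 (by rw [← mem_val, ← hlA]; exact ha)
    exact ham (le_antisymm (hmax.2 haA hma) hma)

open scoped Classical in
lemma sum_linearExtensions_eq_sum_maximal {M : Type*} [AddCommMonoid M] (hA : A.Nonempty)
    (f : List α → M) :
    ∑ l ∈ linearExtensions A, f l =
      ∑ m ∈ A with Maximal (· ∈ A) m, ∑ l ∈ linearExtensions (A.erase m), f (l ++ [m]) := by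
  have hdecomp : linearExtensions A = {m ∈ A | Maximal (· ∈ A) m}.biUnion
      fun m => (linearExtensions (A.erase m)).image (· ++ [m]) := by
    ext l
    rcases l.eq_nil_or_concat with rfl | ⟨l, m, rfl⟩
    · simpa [mem_linearExtensions] using fun h => hA.ne_empty (val_eq_zero.1 h.symm)
    · simpa [append_singleton_mem_linearExtensions] using fun _ h => h.1
  rw [hdecomp, sum_biUnion]
  · exact sum_congr rfl fun m _ => sum_image fun _ _ _ _ h => List.append_left_injective _ h
  · intro m _ m' _ hne
    simp only [Function.onFun, disjoint_left, mem_image]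
    rintro _ ⟨l, -, rfl⟩ ⟨l', -, h⟩
    exact hne (List.singleton_inj.1 (List.append_inj' h rfl).2).symm

lemma ofFn_mem_linearExtensions_univ [Fintype α] {n : ℕ} (σ : Fin n ≃ α) :
    List.ofFn σ ∈ linearExtensions univ ↔ ∀ a b, σ a ≤ σ b → a ≤ b := by
  have hval : (List.ofFn σ : Multiset α) = univ.val :=
    (Multiset.Nodup.ext (Multiset.coe_nodup.2 (List.nodup_ofFn.2 σ.injective)) univ.nodup).2
      fun a => by simpa using σ.surjective a
  rw [mem_linearExtensions, List.pairwise_ofFn, and_iff_right hval]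
  exact ⟨fun h a b hab => not_lt.1 fun hba => h hba hab,
    fun h i j hij hji => (h j i hji).not_gt hij⟩

lemma sum_linearExtensions_univ [Fintype α] {M : Type*} [AddCommMonoid M] {n : ℕ}
    (hn : Fintype.card α = n) (g : List α → M) :
    ∑ l ∈ linearExtensions univ, g l =
      ∑ σ : Fin n ≃ α with ∀ a b, σ a ≤ σ b → a ≤ b, g (List.ofFn σ) := by
  symm
  refine sum_bij (fun σ _ => List.ofFn σ) (fun σ hσ => ?_) (fun σ _ τ _ h => ?_)
    (fun l hl => ?_) fun _ _ => rfl
  · exact (ofFn_mem_linearExtensions_univ σ).2 (mem_filter.1 hσ).2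
  · exact DFunLike.coe_injective (List.ofFn_inj.1 h)
  · obtain ⟨σ, rfl⟩ := exists_equiv_ofFn_eq hn (mem_linearExtensions.1 hl).1
    exact ⟨σ, mem_filter.2 ⟨mem_univ σ, (ofFn_mem_linearExtensions_univ σ).1 hl⟩, rfl⟩

end

variable [DecidableEq α] (hforest : ∀ i : α, IsChain (· ≤ ·) (Set.Ici i)) (u : α → F)
  (hu : ∀ s : Finset α, s.Nonempty → ∑ j ∈ s, u j ≠ 0)
include hforest hu

theorem hookProd_eq_sum_linearExtensions (A : Finset α) :
    hookProd u A = ∑ l ∈ linearExtensions A, prodInvPrefixSums u l := by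
  induction A using Finset.strongInduction with
  | H A ih =>
  rcases A.eq_empty_or_nonempty with rfl | hA
  · simp [hookProd, prodInvPrefixSums]
  have hm_ne {m : α} (hm : Maximal (· ∈ A) m) : ∑ j ∈ A with j ≤ m, u j ≠ 0 :=
    hu _ ⟨m, mem_filter.2 ⟨hm.1, le_rfl⟩⟩
  classical
  calc hookProd u A
      = (∑ j ∈ A, u j)⁻¹ *
          ∑ m ∈ A with Maximal (· ∈ A) m, (∑ j ∈ A with j ≤ m, u j) * hookProd u A := by
        rw [← sum_mul, sum_maximal_sum_le hforest, inv_mul_cancel_left₀ (hu A hA)]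
    _ = (∑ j ∈ A, u j)⁻¹ * ∑ m ∈ A with Maximal (· ∈ A) m, hookProd u (A.erase m) := by
        refine congrArg _ (sum_congr rfl fun m hm => ?_)
        have hm := (mem_filter.1 hm).2
        rw [hookProd_eq_inv_mul_hookProd_erase u hm, mul_inv_cancel_left₀ (hm_ne hm)]
    _ = ∑ m ∈ A with Maximal (· ∈ A) m,
          ∑ l ∈ linearExtensions (A.erase m), prodInvPrefixSums u (l ++ [m]) := by
        rw [mul_sum]
        refine sum_congr rfl fun m hm => ?_
        have hm := (mem_filter.1 hm).2
        rw [ih _ (erase_ssubset hm.1), mul_sum]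
        refine sum_congr rfl fun l hl => ?_
        rw [prodInvPrefixSums_append_singleton, sum_map_of_mem_linearExtensions u
          (append_singleton_mem_linearExtensions.2 ⟨hm, hl⟩), mul_comm]
    _ = ∑ l ∈ linearExtensions A, prodInvPrefixSums u l :=
        (sum_linearExtensions_eq_sum_maximal hA _).symm

theorem hookProd_univ_eq_sum_linearExtension_equivs [Fintype α] {n : ℕ}
    (hn : Fintype.card α = n) :
    hookProd u univ =
      ∑ σ : Fin n ≃ α with ∀ a b, σ a ≤ σ b → a ≤ b, ∏ k, (∑ j ∈ Iic k, u (σ j))⁻¹ := by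
  rw [hookProd_eq_sum_linearExtensions hforest u hu, sum_linearExtensions_univ hn]
  exact sum_congr rfl fun σ _ => prodInvPrefixSums_ofFn u σ

end PartialOrder

lemma MvPolynomial.sum_X_ne_zero {σ R : Type*} [CommSemiring R] [Nontrivial R] {s : Finset σ}
    (hs : s.Nonempty) : ∑ i ∈ s, (X i : MvPolynomial σ R) ≠ 0 := by
  classical
  obtain ⟨i, hi⟩ := hs
  intro h
  have hcoeff := congrArg (coeff (Finsupp.single i 1)) h
  rw [coeff_sum, sum_eq_single i (fun j _ hji => ?_) (absurd hi), coeff_X, if_pos rfl,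
    coeff_zero] at hcoeff
  · exact one_ne_zero hcoeff
  · rw [coeff_X]
    exact if_neg fun h => hji (Finsupp.single_left_injective (one_ne_zero (α := ℕ)) h)

theorem noninterleaving_forest_fraction_eq_sum_linear_extensions_general (n : ℕ)
    (le : Fin n → Fin n → Prop) [DecidableRel le]
    (hrefl : ∀ i, le i i)
    (hantisymm : ∀ i j, le i j → le j i → i = j)
    (htrans : ∀ i j k, le i j → le j k → le i k)
    (hforest : ∀ i j k, le i j → le i k → le j k ∨ le k j) :
    letI F := FractionRing (MvPolynomial (Fin n) ℚ)
    letI u : Fin n → F :=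
      fun i => algebraMap (MvPolynomial (Fin n) ℚ) F (MvPolynomial.X i)
    ∏ i : Fin n, (∑ j ∈ Finset.univ.filter (fun j => le j i), u j)⁻¹ =
      ∑ σ ∈ Finset.univ.filter
          (fun σ : Equiv.Perm (Fin n) => ∀ a b : Fin n, le (σ a) (σ b) → a ≤ b),
        ∏ k : Fin n, (∑ j ∈ Finset.Iic k, u (σ j))⁻¹ := by
  -- A second order on `Fin n`, besides the standard one indexing positions; with it the general
  -- theorem is the goal up to unfolding.
  let P : PartialOrder (Fin n) :=
    { le, lt := fun a b => le a b ∧ ¬ le b a, le_refl := hrefl, le_trans := htrans,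
      le_antisymm := hantisymm }
  refine @hookProd_univ_eq_sum_linearExtension_equivs (Fin n)
    (FractionRing (MvPolynomial (Fin n) ℚ)) _ P ‹_› _ (fun i j hj k hk _ => hforest i j k hj hk)
    _ (fun s hs => ?_) _ n (Fintype.card_fin n)
  rw [← map_sum]
  exact (map_ne_zero_iff _ (IsFractionRing.injective _ _)).2 (MvPolynomial.sum_X_ne_zero hs)

/-- Let `P` be a poset on `{1,…,n}` whose Hasse diagram is a forest (every strict
up-set is a chain) and which is non-interleaving: the set of elements weakly below
any element is an interval of integers. Then
`∏_i 1/(∑_{j ≤_P i} u_j) = ∑_{σ ∈ L(P)} ∏_k 1/(u_{σ(1)}+⋯+u_{σ(k)})`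
in `ℚ(u_1,…,u_n)`, where `L(P)` is the set of linear extensions of `P`. -/
theorem noninterleaving_forest_fraction_eq_sum_linear_extensions (n : ℕ)
    (le : Fin n → Fin n → Prop) [DecidableRel le]
    (hrefl : ∀ i, le i i)
    (hantisymm : ∀ i j, le i j → le j i → i = j)
    (htrans : ∀ i j k, le i j → le j k → le i k)
    (hforest : ∀ i j k, le i j → le i k → le j k ∨ le k j)
    (hinterval : ∀ i a b c : Fin n, le a i → le c i → a ≤ b → b ≤ c → le b i) :
    letI F := FractionRing (MvPolynomial (Fin n) ℚ)
    letI u : Fin n → F :=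
      fun i => algebraMap (MvPolynomial (Fin n) ℚ) F (MvPolynomial.X i)
    ∏ i : Fin n, (∑ j ∈ Finset.univ.filter (fun j => le j i), u j)⁻¹ =
      ∑ σ ∈ Finset.univ.filter
          (fun σ : Equiv.Perm (Fin n) => ∀ a b : Fin n, le (σ a) (σ b) → a ≤ b),
        ∏ k : Fin n, (∑ j ∈ Finset.Iic k, u (σ j))⁻¹ :=
  noninterleaving_forest_fraction_eq_sum_linear_extensions_general n le hrefl hantisymm htrans
    hforest
end

section
/- More generally, for any finite forest poset P on {1,...,n} (each element has at most one element covering it, i.e., the Hasse diagram is a rooted forest with roots maximal), the identity ∏_{i=1}^n 1/(∑_{j ≤_P i} u_j) = ∑_{σ ∈ L(P)} 1/(u_{σ(1)}(u_{σ(1)}+u_{σ(2)})···(u_{σ(1)}+···+u_{σ(n)})) holds in ℚ(u_1,...,u_n). -/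
open Finset

section Forest

variable {n : ℕ} (le : Fin n → Fin n → Prop) [DecidableRel le]

/-- Linear-extension lists of a finset. -/
private noncomputable def exts (S : Finset (Fin n)) : Finset (List (Fin n)) :=
  S.toList.permutations.toFinset.filter (fun l => l.Pairwise fun a b => ¬ le b a)

private lemma mem_exts {S : Finset (Fin n)} {l : List (Fin n)} :
    l ∈ exts le S ↔ l.Nodup ∧ l.toFinset = S ∧ l.Pairwise (fun a b => ¬ le b a) := by
  simp only [exts, Finset.mem_filter, List.mem_toFinset, List.mem_permutations]
  constructor
  · rintro ⟨hp, hpw⟩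
    have hnd : l.Nodup := hp.symm.nodup S.nodup_toList
    refine ⟨hnd, ?_, hpw⟩
    ext a
    simp [List.mem_toFinset, hp.mem_iff, Finset.mem_toList]
  · rintro ⟨hnd, htf, hpw⟩
    refine ⟨(List.perm_ext_iff_of_nodup hnd S.nodup_toList).mpr fun a => ?_, hpw⟩
    rw [Finset.mem_toList, ← htf, List.mem_toFinset]

/-- The prefix-sum product associated to a list. -/
private def pf {F : Type} [Field F] (u : Fin n → F) (l : List (Fin n)) : F :=
  ∏ k ∈ Finset.range l.length, (((l.take (k + 1)).map u).sum)⁻¹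

private lemma pf_append {F : Type} [Field F] (u : Fin n → F) (l : List (Fin n)) (r : Fin n) :
    pf u (l ++ [r]) = pf u l * (((l ++ [r]).map u).sum)⁻¹ := by
  unfold pf
  rw [List.length_append, List.length_singleton, Finset.prod_range_succ]
  congr 1
  · refine Finset.prod_congr rfl fun k hk => ?_
    rw [List.take_append_of_le_length]
    exact Nat.succ_le_of_lt (Finset.mem_range.mp hk)
  · congr 1
    rw [List.take_of_length_le (by simp)]

private lemma exists_greatest (htrans : ∀ i j k, le i j → le j k → le i k) :
    ∀ (T : Finset (Fin n)), T.Nonempty → (∀ a ∈ T, ∀ b ∈ T, le a b ∨ le b a) →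
      ∃ r ∈ T, ∀ a ∈ T, le a r := by
  intro T
  induction T using Finset.induction_on with
  | empty => rintro ⟨x, hx⟩; simp at hx
  | @insert a s hxs ih =>
    intro _ hchain
    rcases s.eq_empty_or_nonempty with rfl | hs
    · refine ⟨a, mem_insert_self _ _, fun x hxmem => ?_⟩
      rcases mem_insert.mp hxmem with rfl | hmem
      · rcases hchain x (mem_insert_self _ _) x (mem_insert_self _ _) with h | h <;> exact h
      · simp at hmem
    · obtain ⟨r, hr, hmax⟩ := ih hs
        (fun x hx y hy => hchain x (mem_insert_of_mem hx) y (mem_insert_of_mem hy))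
      rcases hchain a (mem_insert_self _ _) r (mem_insert_of_mem hr) with h | h
      · refine ⟨r, mem_insert_of_mem hr, fun x hxmem => ?_⟩
        rcases mem_insert.mp hxmem with rfl | hmem
        · exact h
        · exact hmax x hmem
      · refine ⟨a, mem_insert_self _ _, fun x hxmem => ?_⟩
        rcases mem_insert.mp hxmem with rfl | hmem
        · rcases hchain x (mem_insert_self _ _) x (mem_insert_self _ _) with h' | h' <;> exact h'
        · exact htrans _ _ _ (hmax x hmem) h

variable (hrefl : ∀ i, le i i)
variable (hantisymm : ∀ i j, le i j → le j i → i = j)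
variable (htrans : ∀ i j k, le i j → le j k → le i k)
variable (hforest : ∀ i j k, le i j → le i k → le j k ∨ le k j)

include hrefl hantisymm htrans hforest in
private lemma exists_max_above (S : Finset (Fin n)) {j : Fin n} (hj : j ∈ S) :
    ∃ r ∈ S, le j r ∧ ∀ i ∈ S, le r i → i = r := by
  obtain ⟨r, hr, hmax⟩ := exists_greatest le htrans (S.filter (fun x => le j x))
    ⟨j, by simp [hj, hrefl j]⟩
    (by
      intro a ha b hb
      simp only [Finset.mem_filter] at ha hb
      exact hforest j a b ha.2 hb.2)
  simp only [Finset.mem_filter] at hr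
  refine ⟨r, hr.1, hr.2, fun i hi hri => ?_⟩
  have hji : le j i := htrans _ _ _ hr.2 hri
  have := hmax i (by simp [hi, hji])
  exact hantisymm i r this hri

include hrefl hantisymm htrans hforest in
private lemma partition_max (S : Finset (Fin n)) :
    S = (S.filter (fun r => ∀ i ∈ S, le r i → i = r)).biUnion
        (fun r => S.filter (fun j => le j r)) := by
  ext j
  simp only [Finset.mem_biUnion, Finset.mem_filter]
  constructor
  · intro hj
    obtain ⟨r, hr, hjr, hmax⟩ := exists_max_above le hrefl hantisymm htrans hforest S hj
    exact ⟨r, ⟨hr, hmax⟩, hj, hjr⟩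
  · rintro ⟨r, _, hj, _⟩
    exact hj

include hantisymm hforest in
private lemma disjoint_max (S : Finset (Fin n)) :
    (↑(S.filter (fun r => ∀ i ∈ S, le r i → i = r)) : Set (Fin n)).PairwiseDisjoint
      (fun r => S.filter (fun j => le j r)) := by
  intro r hr r' hr' hne
  simp only [Finset.coe_filter, Set.mem_setOf_eq] at hr hr'
  simp only [Function.onFun]
  rw [Finset.disjoint_left]
  intro j hj hj'
  simp only [Finset.mem_filter] at hj hj'
  rcases hforest j r r' hj.2 hj'.2 with h | h
  · exact hne (hr.2 r' hr'.1 h).symm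
  · exact hne (hr'.2 r hr.1 h)



private lemma toFinset_concat {d : List (Fin n)} {S : Finset (Fin n)} {r : Fin n}
    (hrS : r ∈ S) (htfd : d.toFinset = S.erase r) : (d ++ [r]).toFinset = S := by
  ext a
  simp only [List.toFinset_append, Finset.mem_union, htfd, List.mem_toFinset,
    List.mem_singleton, Finset.mem_erase]
  constructor
  · rintro (⟨-, h⟩ | rfl)
    · exact h
    · exact hrS
  · intro h
    by_cases har : a = r
    · exact Or.inr har
    · exact Or.inl ⟨har, h⟩

include hrefl hantisymm htrans hforest in
private lemma exts_decomp (S : Finset (Fin n)) (hne : S.Nonempty) :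
    exts le S = (S.filter (fun r => ∀ i ∈ S, le r i → i = r)).biUnion
      (fun r => (exts le (S.erase r)).image (fun l => l ++ [r])) := by
  ext l
  simp only [Finset.mem_biUnion, Finset.mem_image, Finset.mem_filter, mem_exts]
  constructor
  · intro hl
    obtain ⟨hnd, htf, hpw⟩ := hl
    have hlne : l ≠ [] := by
      rintro rfl
      simp only [List.toFinset_nil] at htf
      exact hne.ne_empty htf.symm
    set r := l.getLast hlne with hrdef
    set d := l.dropLast with hddef
    have hdl : d ++ [r] = l := List.dropLast_append_getLast hlne
    have hrl : r ∈ l := List.getLast_mem hlne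
    have hrS : r ∈ S := htf ▸ List.mem_toFinset.mpr hrl
    have hnd' : (d ++ [r]).Nodup := hdl ▸ hnd
    rw [List.nodup_append] at hnd'
    obtain ⟨hndd, -, hdisj⟩ := hnd'
    have hrd : r ∉ d := fun h => hdisj r h r (by simp) rfl
    have hpw' : (d ++ [r]).Pairwise (fun a b => ¬ le b a) := hdl ▸ hpw
    rw [List.pairwise_append] at hpw'
    have hmax : ∀ i ∈ S, le r i → i = r := by
      intro i hi hri
      by_contra hir
      have hil : i ∈ l := by rw [← List.mem_toFinset, htf]; exact hi
      have hid : i ∈ d := by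
        rw [← hdl] at hil
        rcases List.mem_append.mp hil with h | h
        · exact h
        · simp only [List.mem_singleton] at h; exact absurd h hir
      exact hpw'.2.2 i hid r (by simp) hri
    refine ⟨r, ⟨hrS, hmax⟩, d, ?_, hdl⟩
    refine ⟨hndd, ?_, hpw'.1⟩
    ext a
    simp only [List.mem_toFinset, Finset.mem_erase]
    constructor
    · intro ha
      refine ⟨fun h => hrd (h ▸ ha), ?_⟩
      rw [← htf, ← hdl]
      exact List.mem_toFinset.mpr (List.mem_append.mpr (Or.inl ha))
    · rintro ⟨har, haS⟩
      have : a ∈ l := List.mem_toFinset.mp (htf ▸ haS)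
      rw [← hdl] at this
      rcases List.mem_append.mp this with h | h
      · exact h
      · simp only [List.mem_singleton] at h; exact absurd h har
  · rintro ⟨r, ⟨hrS, hmax⟩, d, ⟨hndd, htfd, hpwd⟩, rfl⟩
    have hrd : r ∉ d := fun h =>
      (Finset.mem_erase.mp (htfd ▸ List.mem_toFinset.mpr h)).1 rfl
    refine ⟨?_, ?_, ?_⟩
    · rw [List.nodup_append]
      exact ⟨hndd, List.nodup_singleton r, fun a ha b hb => by
        simp only [List.mem_singleton] at hb; subst hb; rintro rfl; exact hrd ha⟩
    · exact toFinset_concat hrS htfd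
    · rw [List.pairwise_append]
      refine ⟨hpwd, List.pairwise_singleton _ _, ?_⟩
      intro a ha b hb hba
      simp only [List.mem_singleton] at hb
      have haS : a ∈ S.erase r := htfd ▸ List.mem_toFinset.mpr ha
      exact (Finset.mem_erase.mp haS).1 (hmax a (Finset.mem_erase.mp haS).2 (hb ▸ hba))

include hrefl hantisymm htrans hforest in
private lemma main_lemma {F : Type} [Field F] (u : Fin n → F)
    (hu : ∀ T : Finset (Fin n), T.Nonempty → ∑ j ∈ T, u j ≠ 0) :
    ∀ S : Finset (Fin n), (∀ i ∈ S, ∀ j, le j i → j ∈ S) →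
      ∏ i ∈ S, (∑ j ∈ S.filter (fun j => le j i), u j)⁻¹ = ∑ l ∈ exts le S, pf u l := by
  intro S
  induction S using Finset.strongInduction with
  | _ S ih =>
    intro hdc
    rcases S.eq_empty_or_nonempty with rfl | hne
    · have : exts le (∅ : Finset (Fin n)) = {[]} := by
        ext l
        simp only [mem_exts, Finset.mem_singleton, List.toFinset_eq_empty_iff]
        constructor
        · rintro ⟨-, h, -⟩; exact h
        · rintro rfl; simp
      rw [this]
      simp [pf]
    · set M := S.filter (fun r => ∀ i ∈ S, le r i → i = r) with hM
      set U : F := ∑ j ∈ S, u j with hU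
      have hUne : U ≠ 0 := hu S hne
      rw [exts_decomp le hrefl hantisymm htrans hforest S hne,
        Finset.sum_biUnion (by
          intro r hr r' hr' hrr'
          simp only [Function.onFun]
          rw [Finset.disjoint_left]
          rintro l hl hl'
          obtain ⟨d, -, rfl⟩ := Finset.mem_image.mp hl
          obtain ⟨d', -, heq⟩ := Finset.mem_image.mp hl'
          apply hrr'
          have h1 : (d ++ [r]).getLast? = some r := List.getLast?_concat
          have h2 : (d' ++ [r']).getLast? = some r' := List.getLast?_concat
          rw [heq, h1] at h2
          exact Option.some_injective _ h2)]
      have hstep : ∀ r ∈ M,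
          ∑ l ∈ (exts le (S.erase r)).image (fun l => l ++ [r]), pf u l
            = (∑ j ∈ S.filter (fun j => le j r), u j) *
              (∏ i ∈ S, (∑ j ∈ S.filter (fun j => le j i), u j)⁻¹) * U⁻¹ := by
        intro r hr
        simp only [hM, Finset.mem_filter] at hr
        obtain ⟨hrS, hrmax⟩ := hr
        rw [Finset.sum_image (by
          intro a _ b _ hab
          exact List.append_cancel_right hab)]
        have hdc' : ∀ i ∈ S.erase r, ∀ j, le j i → j ∈ S.erase r := by
          intro i hi j hji
          obtain ⟨hir, hiS⟩ := Finset.mem_erase.mp hi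
          refine Finset.mem_erase.mpr ⟨fun h => hir (hrmax i hiS (h ▸ hji)), hdc i hiS j hji⟩
        have hsub : S.erase r ⊂ S := Finset.erase_ssubset hrS
        have hih := ih (S.erase r) hsub hdc'
        have hfilter : ∀ i ∈ S.erase r,
            (∑ j ∈ (S.erase r).filter (fun j => le j i), u j)⁻¹
              = (∑ j ∈ S.filter (fun j => le j i), u j)⁻¹ := by
          intro i hi
          obtain ⟨hir, hiS⟩ := Finset.mem_erase.mp hi
          congr 1
          refine Finset.sum_congr ?_ (fun _ _ => rfl)
          ext j
          simp only [Finset.mem_filter, Finset.mem_erase]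
          constructor
          · rintro ⟨⟨-, hjS⟩, hji⟩; exact ⟨hjS, hji⟩
          · rintro ⟨hjS, hji⟩
            refine ⟨⟨fun h => hir (hrmax i hiS (h ▸ hji)), hjS⟩, hji⟩
        have hsum : ∀ l ∈ exts le (S.erase r), pf u (l ++ [r]) = pf u l * U⁻¹ := by
          intro l hl
          obtain ⟨hnd, htf, -⟩ := (mem_exts le).mp hl
          have hnd2 : (l ++ [r]).Nodup := by
            rw [List.nodup_append]
            refine ⟨hnd, List.nodup_singleton r, fun a ha b hb => ?_⟩
            simp only [List.mem_singleton] at hb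
            subst hb
            rintro rfl
            exact (Finset.mem_erase.mp (htf ▸ List.mem_toFinset.mpr ha)).1 rfl
          have htf2 : (l ++ [r]).toFinset = S := toFinset_concat hrS htf
          have hsumU : ((l ++ [r]).map u).sum = U := by
            rw [hU, ← htf2]
            exact (List.sum_toFinset u hnd2).symm
          rw [pf_append, hsumU]
        rw [Finset.sum_congr rfl hsum, ← Finset.sum_mul, ← hih]
        rw [Finset.prod_congr rfl hfilter]
        have hDr : ∑ j ∈ S.filter (fun j => le j r), u j ≠ 0 :=
          hu _ ⟨r, Finset.mem_filter.mpr ⟨hrS, hrefl r⟩⟩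
        have hmpe := Finset.mul_prod_erase S
          (fun i => (∑ j ∈ S.filter (fun j => le j i), u j)⁻¹) hrS
        rw [← hmpe]
        rw [← mul_assoc ((∑ j ∈ S.filter (fun j => le j r), u j)), mul_inv_cancel₀ hDr, one_mul]
      rw [Finset.sum_congr rfl hstep]
      rw [← Finset.sum_mul, ← Finset.sum_mul]
      have hpart : ∑ r ∈ M, ∑ j ∈ S.filter (fun j => le j r), u j = U := by
        rw [hU]
        conv_rhs => rw [partition_max le hrefl hantisymm htrans hforest S]
        rw [Finset.sum_biUnion (disjoint_max le hantisymm hforest S)]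
      rw [hpart, mul_comm U, mul_assoc, mul_inv_cancel₀ hUne, mul_one]

end Forest

section Transfer

variable {n : ℕ}

private lemma take_ofFn_sum {F : Type} [Field F] (u : Fin n → F) (σ : Equiv.Perm (Fin n)) :
    ∀ m : ℕ, m ≤ n → (((List.ofFn σ).take m).map u).sum
      = ∑ j ∈ Finset.univ.filter (fun j : Fin n => (j : ℕ) < m), u (σ j) := by
  intro m
  induction m with
  | zero => intro _; simp
  | succ m ihm =>
    intro hm
    have hmn : m < n := Nat.lt_of_succ_le hm
    rw [List.take_succ, List.map_append, List.sum_append, ihm (Nat.le_of_lt hmn)]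
    have hget : (List.ofFn σ)[m]? = some (σ ⟨m, hmn⟩) := by
      rw [List.getElem?_ofFn]
      simp [List.ofFnNthVal, hmn]
    rw [hget]
    simp only [Option.toList_some, List.map_cons, List.map_nil, List.sum_cons, List.sum_nil,
      add_zero]
    have hins : (Finset.univ.filter (fun j : Fin n => (j : ℕ) < m + 1))
        = insert ⟨m, hmn⟩ (Finset.univ.filter (fun j : Fin n => (j : ℕ) < m)) := by
      ext j
      simp only [Finset.mem_filter, Finset.mem_univ, true_and, Finset.mem_insert]
      rw [Nat.lt_succ_iff_lt_or_eq]
      constructor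
      · rintro (h | h)
        · exact Or.inr h
        · exact Or.inl (Fin.ext h)
      · rintro (rfl | h)
        · exact Or.inr rfl
        · exact Or.inl h
    rw [hins, Finset.sum_insert (by simp)]
    rw [add_comm]

private lemma pf_ofFn {F : Type} [Field F] (u : Fin n → F) (σ : Equiv.Perm (Fin n)) :
    pf u (List.ofFn ⇑σ) = ∏ k : Fin n, (∑ j ∈ Finset.Iic k, u (σ j))⁻¹ := by
  unfold pf
  rw [List.length_ofFn]
  rw [← Fin.prod_univ_eq_prod_range
    (fun m => ((((List.ofFn ⇑σ).take (m + 1)).map u).sum)⁻¹) n]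
  refine Finset.prod_congr rfl fun k _ => ?_
  rw [take_ofFn_sum u σ (k + 1) k.isLt]
  congr 1
  refine Finset.sum_congr ?_ (fun _ _ => rfl)
  ext j
  simp only [Finset.mem_filter, Finset.mem_univ, true_and, Finset.mem_Iic, Nat.lt_succ_iff,
    Fin.le_def]

private noncomputable def listPerm (l : List (Fin n)) (hlen : l.length = n) (hnd : l.Nodup) :
    Equiv.Perm (Fin n) :=
  Equiv.ofBijective (fun i => l.get (Fin.cast hlen.symm i))
    (Finite.injective_iff_bijective.mp
      (fun a b hab => Fin.cast_injective hlen.symm (List.nodup_iff_injective_get.mp hnd hab)))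

private lemma len_of_mem_exts {le : Fin n → Fin n → Prop} [DecidableRel le] {l : List (Fin n)}
    (hl : l ∈ exts le Finset.univ) : l.length = n := by
  obtain ⟨hnd, htf, -⟩ := (mem_exts le).mp hl
  rw [← List.toFinset_card_of_nodup hnd, htf, Finset.card_univ, Fintype.card_fin]

end Transfer

/-- For any forest poset `P` on `{1,…,n}` (every element has at most one cover;
equivalently the strict up-set of every element is a chain, roots being maximal),
`∏_i 1/(∑_{j ≤_P i} u_j) = ∑_{σ ∈ L(P)} 1/(u_{σ(1)}(u_{σ(1)}+u_{σ(2)})⋯(u_{σ(1)}+⋯+u_{σ(n)}))`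
in the field of rational functions `ℚ(u_1,…,u_n)`, where `L(P)` is the set of linear
extensions of `P`. -/
theorem forest_poset_fraction_eq_sum_linear_extensions (n : ℕ)
    (le : Fin n → Fin n → Prop) [DecidableRel le]
    (hrefl : ∀ i, le i i)
    (hantisymm : ∀ i j, le i j → le j i → i = j)
    (htrans : ∀ i j k, le i j → le j k → le i k)
    (hforest : ∀ i j k, le i j → le i k → le j k ∨ le k j) :
    letI F := FractionRing (MvPolynomial (Fin n) ℚ)
    letI u : Fin n → F :=
      fun i => algebraMap (MvPolynomial (Fin n) ℚ) F (MvPolynomial.X i)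
    ∏ i : Fin n, (∑ j ∈ Finset.univ.filter (fun j => le j i), u j)⁻¹ =
      ∑ σ ∈ Finset.univ.filter
          (fun σ : Equiv.Perm (Fin n) => ∀ a b : Fin n, le (σ a) (σ b) → a ≤ b),
        ∏ k : Fin n, (∑ j ∈ Finset.Iic k, u (σ j))⁻¹ := by
  set F := FractionRing (MvPolynomial (Fin n) ℚ) with hF
  set u : Fin n → F := fun i => algebraMap (MvPolynomial (Fin n) ℚ) F (MvPolynomial.X i)
    with hu_def
  have hu : ∀ T : Finset (Fin n), T.Nonempty → ∑ j ∈ T, u j ≠ 0 := by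
    intro T hT
    have : ∑ j ∈ T, u j
        = algebraMap (MvPolynomial (Fin n) ℚ) F (∑ j ∈ T, MvPolynomial.X j) := by
      rw [map_sum]
    rw [this]
    rw [map_ne_zero_iff _ (IsFractionRing.injective (MvPolynomial (Fin n) ℚ) F)]
    intro h0
    have heval := congrArg (MvPolynomial.eval (fun _ : Fin n => (1 : ℚ))) h0
    rw [map_sum, map_zero] at heval
    simp only [MvPolynomial.eval_X] at heval
    rw [Finset.sum_const, nsmul_eq_mul, mul_one] at heval
    have := hT.card_pos
    exact_mod_cast absurd heval (by positivity)
  have hmain := main_lemma le hrefl hantisymm htrans hforest u hu Finset.univ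
    (fun _ _ _ _ => Finset.mem_univ _)
  rw [hmain]
  refine Finset.sum_bij' (i := fun l hl => listPerm l (len_of_mem_exts hl)
      ((mem_exts le).mp hl).1)
    (j := fun σ _ => List.ofFn ⇑σ) ?_ ?_ ?_ ?_ ?_
  · -- listPerm lands in the filter
    intro l hl
    obtain ⟨hnd, htf, hpw⟩ := (mem_exts le).mp hl
    simp only [Finset.mem_filter, Finset.mem_univ, true_and]
    intro a b hab
    by_contra hba
    have hlt : b < a := lt_of_not_ge hba
    have := List.pairwise_iff_get.mp hpw (Fin.cast (len_of_mem_exts hl).symm b)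
      (Fin.cast (len_of_mem_exts hl).symm a) (by simpa using hlt)
    exact this hab
  · -- ofFn lands in exts
    intro σ hσ
    simp only [Finset.mem_filter, Finset.mem_univ, true_and] at hσ
    rw [mem_exts]
    refine ⟨List.nodup_ofFn.mpr σ.injective, ?_, ?_⟩
    · ext a
      simp only [List.mem_toFinset, List.mem_ofFn, Finset.mem_univ, iff_true]
      exact ⟨σ.symm a, σ.apply_symm_apply a⟩
    · rw [List.pairwise_iff_get]
      intro i j hij hle
      simp only [List.get_ofFn] at hle
      have := hσ _ _ hle
      rw [Fin.le_def] at this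
      simp only [Fin.coe_cast] at this
      exact absurd (lt_of_le_of_lt (by exact_mod_cast this) hij) (lt_irrefl _)
  · -- right inverse : ofFn (listPerm l) = l
    intro l hl
    apply List.ext_get (by simp [len_of_mem_exts hl])
    intro i h1 h2
    simp [listPerm, List.get_ofFn]
  · -- left inverse : listPerm (ofFn σ) = σ
    intro σ hσ
    ext i
    simp [listPerm, List.get_ofFn]
  · -- values agree
    intro l hl
    have h1 : List.ofFn ⇑(listPerm l (len_of_mem_exts hl) ((mem_exts le).mp hl).1) = l := by
      apply List.ext_get (by simp [len_of_mem_exts hl])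
      intro i h1 h2
      simp [listPerm, List.get_ofFn]
    rw [← pf_ofFn u (listPerm l (len_of_mem_exts hl) ((mem_exts le).mp hl).1), h1]
end

section
/- The number of linear extensions of a forest poset P on n elements equals n! divided by the product over all i of the size of the principal order ideal {j : j ≤_P i} (the hook-length formula for forests). -/
/-!
In a linear extension of a forest the last position holds a root `m`, and deleting it leaves a
linear extension of the forest without `m`, whose principal ideals are those of the original forest
except the one of `m`. Writing `e` for the number of linear extensions and `H` for the product of
the sizes of the principal ideals, induction therefore gives
`e(P) H(P) = ∑ₘ e(P ∖ m) H(P ∖ m) |↓m| = (n - 1)! ∑ₘ |↓m| = n!`,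
because the principal ideals of the roots partition a forest.
-/

open Finset Function
open scoped Nat

namespace HookLength

structure IsForestOrder {α : Type*} (r : α → α → Prop) : Prop where
  refl : ∀ a, r a a
  antisymm : ∀ a b, r a b → r b a → a = b
  trans : ∀ a b c, r a b → r b c → r a c
  forest : ∀ a b c, r a b → r a c → r b c ∨ r c b

lemma IsForestOrder.onFun {α β : Type*} {r : α → α → Prop} (h : IsForestOrder r) {f : β → α}
    (hf : Injective f) : IsForestOrder (r on f) where
  refl a := h.refl (f a)
  antisymm _ _ hab hba := hf (h.antisymm _ _ hab hba)
  trans a b c := h.trans (f a) (f b) (f c)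
  forest a b c := h.forest (f a) (f b) (f c)

section Fintype

variable {α : Type*} [Fintype α] (r : α → α → Prop) [DecidableRel r]

def principalIdeal (i : α) : Finset α := {j | r j i}

variable [DecidableEq α]

def maximals : Finset α := {m | ∀ k, r m k → m = k}

variable {r}

omit [DecidableEq α] in
@[simp] lemma mem_principalIdeal {i j : α} : j ∈ principalIdeal r i ↔ r j i := by
  simp [principalIdeal]

@[simp] lemma mem_maximals {m : α} : m ∈ maximals r ↔ ∀ k, r m k → m = k := by
  simp [maximals]

lemma exists_mem_maximals_of_rel (refl : ∀ a, r a a) (antisymm : ∀ a b, r a b → r b a → a = b)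
    (trans : ∀ a b c, r a b → r b c → r a c) (a : α) : ∃ m ∈ maximals r, r a m := by
  obtain ⟨m, ham, hmax⟩ := exists_max_image {m | r a m} (fun m => #(principalIdeal r m))
    ⟨a, by simpa using refl a⟩
  rw [mem_filter_univ] at ham
  refine ⟨m, mem_maximals.2 fun k hmk => ?_, ham⟩
  by_contra hne
  have hssub : principalIdeal r m ⊂ principalIdeal r k :=
    ssubset_iff_of_subset (fun j hj => by simpa using trans _ _ _ (by simpa using hj) hmk)
      |>.2 ⟨k, by simpa using refl k, fun hkm => hne (antisymm _ _ hmk (by simpa using hkm))⟩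
  exact (card_lt_card hssub).not_ge (hmax k (by simpa using trans _ _ _ ham hmk))

lemma IsForestOrder.eq_of_rel_of_rel (h : IsForestOrder r) {a m₁ m₂ : α} (hm₁ : m₁ ∈ maximals r)
    (hm₂ : m₂ ∈ maximals r) (h₁ : r a m₁) (h₂ : r a m₂) : m₁ = m₂ := by
  rcases h.forest a m₁ m₂ h₁ h₂ with h | h
  · exact mem_maximals.1 hm₁ _ h
  · exact (mem_maximals.1 hm₂ _ h).symm

lemma IsForestOrder.sum_card_principalIdeal_maximals (h : IsForestOrder r) :
    ∑ m ∈ maximals r, #(principalIdeal r m) = Fintype.card α := by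
  have hdisj : (maximals r : Set α).PairwiseDisjoint (principalIdeal r) :=
    fun m₁ hm₁ m₂ hm₂ hne => disjoint_left.2 fun a ha₁ ha₂ =>
      hne (h.eq_of_rel_of_rel hm₁ hm₂ (mem_principalIdeal.1 ha₁) (mem_principalIdeal.1 ha₂))
  have hcover : (maximals r).biUnion (principalIdeal r) = univ :=
    eq_univ_of_forall fun a =>
      let ⟨m, hm, ham⟩ := exists_mem_maximals_of_rel h.refl h.antisymm h.trans a
      mem_biUnion.2 ⟨m, hm, mem_principalIdeal.2 ham⟩
  rw [← card_biUnion hdisj, hcover, card_univ]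

end Fintype

section Fin

variable {n : ℕ}

def linearExtensions (r : Fin n → Fin n → Prop) [DecidableRel r] : Finset (Equiv.Perm (Fin n)) :=
  {σ | ∀ a b, r (σ a) (σ b) → a ≤ b}

@[simp] lemma mem_linearExtensions {r : Fin n → Fin n → Prop} [DecidableRel r]
    {σ : Equiv.Perm (Fin n)} : σ ∈ linearExtensions r ↔ ∀ a b, r (σ a) (σ b) → a ≤ b := by
  simp [linearExtensions]

lemma last_mem_maximals {r : Fin (n + 1) → Fin (n + 1) → Prop} [DecidableRel r]
    {σ : Equiv.Perm (Fin (n + 1))} (hσ : σ ∈ linearExtensions r) : σ (Fin.last n) ∈ maximals r := by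
  refine mem_maximals.2 fun k hk => ?_
  obtain ⟨b, rfl⟩ := σ.surjective k
  rw [(Fin.last_le_iff.1 (mem_linearExtensions.1 hσ _ _ hk)).symm]

/-- The permutation putting `m` in the last position and the other elements in the order `τ`. -/
def extendPerm (m : Fin (n + 1)) (τ : Equiv.Perm (Fin n)) : Equiv.Perm (Fin (n + 1)) :=
  finSuccEquivLast.trans ((Equiv.optionCongr τ).trans (finSuccEquiv' m).symm)

@[simp] lemma extendPerm_last (m : Fin (n + 1)) (τ : Equiv.Perm (Fin n)) :
    extendPerm m τ (Fin.last n) = m := by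
  simp [extendPerm, finSuccEquivLast_last]

@[simp] lemma extendPerm_castSucc (m : Fin (n + 1)) (τ : Equiv.Perm (Fin n)) (a : Fin n) :
    extendPerm m τ a.castSucc = m.succAbove (τ a) := by
  simp [extendPerm, finSuccEquivLast_castSucc]

lemma extendPerm_injective (m : Fin (n + 1)) : Injective (extendPerm m) := fun τ₁ τ₂ h =>
  Equiv.ext fun a => by simpa using congr($h a.castSucc)

lemma exists_extendPerm_eq (σ : Equiv.Perm (Fin (n + 1))) :
    ∃ τ, extendPerm (σ (Fin.last n)) τ = σ := by
  set m := σ (Fin.last n)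
  let ρ : Equiv.Perm (Option (Fin n)) :=
    finSuccEquivLast.symm.trans (σ.trans (finSuccEquiv' m))
  have hρ (a : Fin n) : ∃ b, ρ (some a) = some b := by
    have hne : σ a.castSucc ≠ m := σ.injective.ne (Fin.castSucc_lt_last a).ne
    obtain ⟨b, hb⟩ := Fin.exists_succAbove_eq hne
    exact ⟨b, by simp [ρ, finSuccEquivLast_symm_some, ← hb]⟩
  refine ⟨ρ.removeNone, Equiv.ext fun x => ?_⟩
  induction x using Fin.lastCases with
  | last => simp [m]
  | cast a =>
    have := congr((finSuccEquiv' m).symm $(Equiv.removeNone_some ρ (hρ a)))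
    simpa [ρ, finSuccEquivLast_symm_some] using this

variable {r : Fin (n + 1) → Fin (n + 1) → Prop} [DecidableRel r] {m : Fin (n + 1)}

lemma extendPerm_mem_linearExtensions_iff (hm : m ∈ maximals r) (τ : Equiv.Perm (Fin n)) :
    extendPerm m τ ∈ linearExtensions r ↔ τ ∈ linearExtensions (r on m.succAbove) := by
  simp only [mem_linearExtensions]
  refine ⟨fun h a b hab => by simpa using h a.castSucc b.castSucc (by simpa using hab),
    fun h a b hab => ?_⟩
  induction b using Fin.lastCases with
  | last => exact Fin.le_last a
  | cast b =>
    induction a using Fin.lastCases with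
    | last =>
      simp only [extendPerm_last, extendPerm_castSucc] at hab
      exact absurd (mem_maximals.1 hm _ hab).symm (Fin.succAbove_ne m _)
    | cast a => simpa using h a b (by simpa using hab)

lemma filter_linearExtensions_last_eq (hm : m ∈ maximals r) :
    {σ ∈ linearExtensions r | σ (Fin.last n) = m} =
      (linearExtensions (r on m.succAbove)).map ⟨extendPerm m, extendPerm_injective m⟩ := by
  ext σ
  simp only [mem_filter, mem_map, Embedding.coeFn_mk]
  constructor
  · rintro ⟨hσ, rfl⟩
    obtain ⟨τ, hτ⟩ := exists_extendPerm_eq σ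
    exact ⟨τ, (extendPerm_mem_linearExtensions_iff hm τ).1 (by rwa [hτ]), hτ⟩
  · rintro ⟨τ, hτ, rfl⟩
    exact ⟨(extendPerm_mem_linearExtensions_iff hm τ).2 hτ, extendPerm_last m τ⟩

variable (r) in
lemma card_linearExtensions_succ :
    #(linearExtensions r) = ∑ m ∈ maximals r, #(linearExtensions (r on m.succAbove)) := by
  rw [card_eq_sum_card_fiberwise fun σ hσ => last_mem_maximals hσ]
  exact sum_congr rfl fun m hm => by rw [filter_linearExtensions_last_eq hm, card_map]

lemma principalIdeal_succAbove (hm : m ∈ maximals r) (i : Fin n) :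
    principalIdeal r (m.succAbove i) =
      (principalIdeal (r on m.succAbove) i).map (Fin.succAboveEmb m) := by
  ext x
  simp only [mem_principalIdeal, mem_map, Fin.coe_succAboveEmb]
  constructor
  · intro hx
    have hxm : x ≠ m := fun hxm => Fin.succAbove_ne m i (mem_maximals.1 hm _ (hxm ▸ hx)).symm
    obtain ⟨j, rfl⟩ := Fin.exists_succAbove_eq hxm
    exact ⟨j, hx, rfl⟩
  · rintro ⟨j, hj, rfl⟩
    exact hj

lemma prod_card_principalIdeal_succ (hm : m ∈ maximals r) :
    ∏ i, #(principalIdeal r i) =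
      #(principalIdeal r m) * ∏ i, #(principalIdeal (r on m.succAbove) i) := by
  simp only [Fin.prod_univ_succAbove _ m, principalIdeal_succAbove hm, card_map]

end Fin

theorem IsForestOrder.card_linearExtensions_mul_prod {n : ℕ} {r : Fin n → Fin n → Prop}
    [DecidableRel r] (h : IsForestOrder r) :
    #(linearExtensions r) * ∏ i, #(principalIdeal r i) = n ! := by
  induction n with
  | zero => simp [linearExtensions]
  | succ n ih =>
    calc #(linearExtensions r) * ∏ i, #(principalIdeal r i)
        = ∑ m ∈ maximals r, #(linearExtensions (r on m.succAbove)) *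
            (#(principalIdeal r m) * ∏ i, #(principalIdeal (r on m.succAbove) i)) := by
          rw [card_linearExtensions_succ, sum_mul]
          exact sum_congr rfl fun m hm => by rw [prod_card_principalIdeal_succ hm]
      _ = ∑ m ∈ maximals r, n ! * #(principalIdeal r m) := sum_congr rfl fun m _ => by
          rw [mul_left_comm, ih (h.onFun Fin.succAbove_right_injective), mul_comm]
      _ = (n + 1)! := by
          rw [← mul_sum, h.sum_card_principalIdeal_maximals, Fintype.card_fin,
            Nat.factorial_succ, mul_comm]

end HookLength

/-- Hook-length formula for forests: the number of linear extensions of a forest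
poset `P` on `n` elements equals `n!` divided by the product over all `i` of the
size of the principal order ideal `{j : j ≤_P i}`. -/
theorem forest_poset_hook_length_formula (n : ℕ)
    (le : Fin n → Fin n → Prop) [DecidableRel le]
    (hrefl : ∀ i, le i i)
    (hantisymm : ∀ i j, le i j → le j i → i = j)
    (htrans : ∀ i j k, le i j → le j k → le i k)
    (hforest : ∀ i j k, le i j → le i k → le j k ∨ le k j) :
    (Finset.univ.filter
        (fun σ : Equiv.Perm (Fin n) => ∀ a b : Fin n, le (σ a) (σ b) → a ≤ b)).card *
      ∏ i : Fin n, (Finset.univ.filter (fun j => le j i)).card = n.factorial :=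
  HookLength.IsForestOrder.card_linearExtensions_mul_prod ⟨hrefl, hantisymm, htrans, hforest⟩
end

section
/- Let g be the compositional inverse (with respect to composition of formal power series) of f(t) = -t + 2t² - t³, i.e. the power series with g(f(t)) = t. Then the first five coefficients of g are -1, 2, -7, 30, -143, that is, g(t) = -t + 2t² - 7t³ + 30t⁴ - 143t⁵ + ···. -/
open PowerSeries

/-- The first five coefficients of the compositional inverse `g` of
`f(t) = -t + 2t² - t³` are `-1, 2, -7, 30, -143`; the compositional inverse is
characterized by `g(0) = 0` and `f(g(t)) = t`, i.e. `-g + 2g² - g³ = t`. -/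
theorem inverse_of_neg_t_two_t_sq_minus_t_cubed (g : PowerSeries ℚ)
    (h0 : constantCoeff g = 0)
    (hinv : -g + 2 * g ^ 2 - g ^ 3 = PowerSeries.X) :
    coeff 1 g = -1 ∧ coeff 2 g = 2 ∧ coeff 3 g = -7 ∧
      coeff 4 g = 30 ∧ coeff 5 g = -143 := by
  have h0' : coeff 0 g = 0 := by simpa using h0
  rw [two_mul] at hinv
  have e : ∀ n, coeff n (-g + (g ^ 2 + g ^ 2) - g ^ 3) = coeff n (PowerSeries.X : PowerSeries ℚ) :=
    fun n => by rw [hinv]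
  have e1 := e 1
  have e2 := e 2
  have e3 := e 3
  have e4 := e 4
  have e5 := e 5
  simp [pow_succ, pow_zero, one_mul, coeff_mul,
    Finset.Nat.sum_antidiagonal_eq_sum_range_succ_mk, Finset.sum_range_succ,
    h0', coeff_X] at e1 e2 e3 e4 e5
  have a1 : coeff 1 g = -1 := by linarith [e1]
  rw [a1] at e2 e3 e4 e5
  have a2 : coeff 2 g = 2 := by linarith [e2]
  rw [a2] at e3 e4 e5
  have a3 : coeff 3 g = -7 := by linarith [e3]
  rw [a3] at e4 e5
  have a4 : coeff 4 g = 30 := by linarith [e4]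
  rw [a4] at e5
  have a5 : coeff 5 g = -143 := by linarith [e5]
  exact ⟨a1, a2, a3, a4, a5⟩
end

section
/- The number of non-interleaving forests on {1,...,n} equals the number of non-crossing trees on n+1 vertices arranged on a circle (that is, non-crossing trees with n edges), for all n ≥ 1. -/
/-- A non-interleaving forest on `{1,…,n}`, encoded by its partial order
`le j i` = "`j` is weakly below `i`": a poset whose Hasse diagram is a rooted
forest (every strict up-set is a chain, i.e. every element has at most one cover)
and such that the set of vertices weakly below any vertex is an interval of
integers. -/
def NIForest (n : ℕ) : Type :=
  {le : Fin n → Fin n → Bool //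
    (∀ i, le i i) ∧
    (∀ i j, le i j → le j i → i = j) ∧
    (∀ i j k, le i j → le j k → le i k) ∧
    (∀ i j k, le i j → le i k → (le j k ∨ le k j)) ∧
    (∀ i a b c : Fin n, le a i → le c i → a ≤ b → b ≤ c → le b i)}

/-- A non-crossing tree on the vertices `0,1,…,n` placed in this order on a
circle: a tree whose edges, drawn as chords, pairwise do not cross. -/
def NCTree (n : ℕ) : Type :=
  {G : SimpleGraph (Fin (n + 1)) //
    G.IsTree ∧
    ∀ a b c d : Fin (n + 1), G.Adj a b → G.Adj c d →
      a < c → c < b → b < d → False}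

namespace NINC
open SimpleGraph

variable {n : ℕ}

/-- boundary-crossing edge of a walk -/
lemma exists_boundary {V : Type*} {G : SimpleGraph V} (P : V → Prop) :
    ∀ {u w : V} (W : G.Walk u w), P u → ¬ P w →
      ∃ s t, G.Adj s t ∧ s ∈ W.support ∧ t ∈ W.support ∧ P s ∧ ¬ P t := by
  intro u w W
  induction W with
  | nil => intro h h'; exact absurd h h'
  | @cons a b c h W ih =>
    intro ha hc
    by_cases hb : P b
    · obtain ⟨s, t, h1, h2, h3, h4, h5⟩ := ih hb hc
      exact ⟨s, t, h1, by simp [h2], by simp [h3], h4, h5⟩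
    · exact ⟨a, b, h, by simp, by simp, ha, hb⟩

section Forest
variable (F : NIForest n)

def fle (i j : Fin n) : Prop := F.1 i j = true

lemma fle_refl (i : Fin n) : fle F i i := F.2.1 i
lemma fle_antisymm {i j} (h : fle F i j) (h' : fle F j i) : i = j := F.2.2.1 i j h h'
lemma fle_trans {i j k} (h : fle F i j) (h' : fle F j k) : fle F i k := F.2.2.2.1 i j k h h'
lemma fle_chain {i j k} (h : fle F i j) (h' : fle F i k) : fle F j k ∨ fle F k j :=
  F.2.2.2.2.1 i j k h h'
lemma fle_interval {i a b c} (ha : fle F a i) (hc : fle F c i) (h1 : a ≤ b) (h2 : b ≤ c) :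
    fle F b i := F.2.2.2.2.2 i a b c ha hc h1 h2

def strictAnc (i : Fin n) : Finset (Fin n) :=
  Finset.univ.filter (fun j => F.1 i j = true ∧ j ≠ i)

lemma mem_strictAnc {i j : Fin n} : j ∈ strictAnc F i ↔ fle F i j ∧ j ≠ i := by
  simp [strictAnc, fle]

lemma chain_min : ∀ (S : Finset (Fin n)),
    (∀ a ∈ S, ∀ b ∈ S, fle F a b ∨ fle F b a) → S.Nonempty →
    ∃ m ∈ S, ∀ x ∈ S, fle F m x := by
  intro S
  induction S using Finset.induction_on with
  | empty => rintro _ ⟨x, hx⟩; simp at hx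
  | @insert a S ha ih =>
    intro hcomp _
    rcases S.eq_empty_or_nonempty with rfl | hS
    · refine ⟨a, by simp, ?_⟩
      intro x hx
      simp only [Finset.mem_insert, Finset.notMem_empty, or_false] at hx
      subst hx; exact fle_refl F x
    · obtain ⟨m, hm, hmin⟩ := ih (fun x hx y hy =>
        hcomp x (Finset.mem_insert_of_mem hx) y (Finset.mem_insert_of_mem hy)) hS
      rcases hcomp a (Finset.mem_insert_self a S) m (Finset.mem_insert_of_mem hm) with ham | hma
      · refine ⟨a, Finset.mem_insert_self a S, ?_⟩
        intro x hx
        rcases Finset.mem_insert.mp hx with rfl | hx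
        · exact fle_refl F x
        · exact fle_trans F ham (hmin x hx)
      · refine ⟨m, Finset.mem_insert_of_mem hm, ?_⟩
        intro x hx
        rcases Finset.mem_insert.mp hx with rfl | hx
        · exact hma
        · exact hmin x hx

lemma strictAnc_comp {i : Fin n} : ∀ a ∈ strictAnc F i, ∀ b ∈ strictAnc F i,
    fle F a b ∨ fle F b a := fun a ha b hb =>
  fle_chain F ((mem_strictAnc F).mp ha).1 ((mem_strictAnc F).mp hb).1

noncomputable def par0 (i : Fin n) : Option (Fin n) :=
  @dite _ (∃ m ∈ strictAnc F i, ∀ x ∈ strictAnc F i, fle F m x) (Classical.dec _)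
    (fun h => some h.choose) (fun _ => none)

lemma par0_some {i m : Fin n} (h : par0 F i = some m) :
    m ∈ strictAnc F i ∧ ∀ x ∈ strictAnc F i, fle F m x := by
  unfold par0 at h
  split at h
  · next hex =>
      obtain ⟨h1, h2⟩ := hex.choose_spec
      cases h
      exact ⟨h1, h2⟩
  · exact absurd h (by simp)

lemma par0_none {i : Fin n} (h : par0 F i = none) : strictAnc F i = ∅ := by
  unfold par0 at h
  split at h
  · exact absurd h (by simp)
  · next hex =>
      by_contra hne
      exact hex (chain_min F _ (strictAnc_comp F) (Finset.nonempty_iff_ne_empty.mpr hne))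

lemma par0_of_strict {i j : Fin n} (h : fle F i j) (hne : j ≠ i) :
    ∃ p, par0 F i = some p ∧ fle F i p ∧ p ≠ i ∧ fle F p j := by
  have hj : j ∈ strictAnc F i := (mem_strictAnc F).mpr ⟨h, hne⟩
  cases hp : par0 F i with
  | none => rw [par0_none F hp] at hj; simp at hj
  | some p =>
      obtain ⟨hm, hmin⟩ := par0_some F hp
      obtain ⟨h1, h2⟩ := (mem_strictAnc F).mp hm
      exact ⟨p, rfl, h1, h2, hmin j hj⟩

noncomputable def parG : Fin (n + 1) → Fin (n + 1) :=
  fun x => Fin.cases 0 (fun i => (par0 F i).elim 0 Fin.succ) x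

@[simp] lemma parG_zero : parG F 0 = 0 := by simp [parG]

lemma parG_succ_none {i : Fin n} (h : par0 F i = none) : parG F i.succ = 0 := by
  simp [parG, h]

lemma parG_succ_some {i p : Fin n} (h : par0 F i = some p) : parG F i.succ = p.succ := by
  simp [parG, h]

lemma parG_ne_self {x : Fin (n + 1)} (hx : x ≠ 0) : parG F x ≠ x := by
  obtain ⟨i, rfl⟩ := Fin.exists_succ_eq.mpr hx
  cases hp : par0 F i with
  | none => rw [parG_succ_none F hp]; exact fun h => (Fin.succ_ne_zero i) h.symm
  | some p =>
      rw [parG_succ_some F hp]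
      intro h
      have := Fin.succ_injective n h
      subst this
      exact (((mem_strictAnc F).mp (par0_some F hp).1).2) rfl

def graph : SimpleGraph (Fin (n + 1)) where
  Adj x y := x ≠ y ∧ (parG F x = y ∨ parG F y = x)
  symm := by
    refine ⟨?_⟩
    rintro x y ⟨h1, h2⟩
    exact ⟨h1.symm, h2.symm⟩
  loopless := ⟨fun x h => h.1 rfl⟩

lemma adj_parG {x : Fin (n + 1)} (hx : x ≠ 0) : (graph F).Adj x (parG F x) :=
  ⟨(parG_ne_self F hx).symm.symm |>.symm, Or.inl rfl⟩

/-- descendants (incl. itself) of a nonzero vertex, as a subset of `Fin (n+1)` -/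
def DS (j : Fin n) : Set (Fin (n + 1)) := {z | ∃ i : Fin n, z = i.succ ∧ fle F i j}

lemma self_mem_DS (j : Fin n) : j.succ ∈ DS F j := ⟨j, rfl, fle_refl F j⟩

lemma zero_not_mem_DS (j : Fin n) : (0 : Fin (n+1)) ∉ DS F j := by
  rintro ⟨i, hi, -⟩
  exact (Fin.succ_ne_zero i) hi.symm

lemma parG_mem_DS {j : Fin n} {z : Fin (n + 1)} (hz : z ∈ DS F j) (hne : z ≠ j.succ) :
    parG F z ∈ DS F j := by
  obtain ⟨i, rfl, hij⟩ := hz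
  have hne' : j ≠ i := fun h => hne (by rw [h])
  obtain ⟨p, hp, -, -, hpj⟩ := par0_of_strict F hij (fun h => hne (by rw [h]))
  rw [parG_succ_some F hp]
  exact ⟨p, rfl, hpj⟩

lemma mem_DS_of_parG {j : Fin n} {z : Fin (n + 1)} (hz : z ≠ 0) (h : parG F z ∈ DS F j) :
    z ∈ DS F j := by
  obtain ⟨i, rfl⟩ := Fin.exists_succ_eq.mpr hz
  obtain ⟨p, hps, hpj⟩ := h
  cases hp : par0 F i with
  | none => rw [parG_succ_none F hp] at hps; exact absurd hps.symm (Fin.succ_ne_zero p)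
  | some q =>
      rw [parG_succ_some F hp] at hps
      have : p = q := Fin.succ_injective n hps.symm
      subst this
      have hip : fle F i p := ((mem_strictAnc F).mp (par0_some F hp).1).1
      exact ⟨i, rfl, fle_trans F hip hpj⟩

lemma parG_succ_not_mem_DS (j : Fin n) : parG F j.succ ∉ DS F j := by
  intro h
  cases hp : par0 F j with
  | none => rw [parG_succ_none F hp] at h; exact zero_not_mem_DS F j h
  | some p =>
      rw [parG_succ_some F hp] at h
      obtain ⟨q, hq, hqj⟩ := h
      have : q = p := Fin.succ_injective n hq.symm
      subst this
      obtain ⟨hjp, hpj'⟩ := (mem_strictAnc F).mp (par0_some F hp).1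
      exact hpj' (fle_antisymm F hqj hjp)

noncomputable def meas : Fin (n + 1) → ℕ :=
  fun x => Fin.cases 0 (fun i => (strictAnc F i).card + 1) x

lemma meas_parG_lt {x : Fin (n + 1)} (hx : x ≠ 0) : meas F (parG F x) < meas F x := by
  obtain ⟨i, rfl⟩ := Fin.exists_succ_eq.mpr hx
  cases hp : par0 F i with
  | none =>
      rw [parG_succ_none F hp]
      simp [meas]
  | some p =>
      rw [parG_succ_some F hp]
      have hsub : strictAnc F p ⊂ strictAnc F i := by
        obtain ⟨hm, hmin⟩ := par0_some F hp
        obtain ⟨hip, hpi⟩ := (mem_strictAnc F).mp hm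
        constructor
        · intro j hj
          obtain ⟨hpj, hjp⟩ := (mem_strictAnc F).mp hj
          refine (mem_strictAnc F).mpr ⟨fle_trans F hip hpj, ?_⟩
          rintro rfl
          exact hpi (fle_antisymm F hpj hip)
        · intro hcon
          have : p ∈ strictAnc F p := hcon hm
          exact ((mem_strictAnc F).mp this).2 rfl
      have := Finset.card_lt_card hsub
      simp only [meas, Fin.cases_succ]
      omega

lemma reach (x : Fin (n + 1)) : (graph F).Reachable x 0 := by
  by_cases hx : x = 0
  · subst hx; rfl
  · have h1 : (graph F).Adj x (parG F x) := adj_parG F hx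
    have h2 : (graph F).Reachable (parG F x) 0 := reach (parG F x)
    exact (h1.reachable).trans h2
termination_by meas F x
decreasing_by exact meas_parG_lt F hx

lemma connected : (graph F).Connected := by
  rw [SimpleGraph.connected_iff]
  exact ⟨fun u v => (reach F u).trans (reach F v).symm, ⟨0⟩⟩

lemma bridge_of_par {v w : Fin (n + 1)} (hp : parG F v = w) (hne : v ≠ w) :
    (graph F).IsBridge s(v, w) := by
  rw [SimpleGraph.isBridge_iff]
  have _hadj : (graph F).Adj v w := ⟨hne, Or.inl hp⟩
  intro hreach
  have hv0 : v ≠ 0 := by rintro rfl; rw [parG_zero] at hp; exact hne hp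
  obtain ⟨j, rfl⟩ := Fin.exists_succ_eq.mpr hv0
  obtain ⟨W⟩ := hreach
  have hwS : w ∉ DS F j := by rw [← hp]; exact parG_succ_not_mem_DS F j
  obtain ⟨s, t, hadj, -, -, hsS, htS⟩ :=
    exists_boundary (· ∈ DS F j) W (self_mem_DS F j) hwS
  rw [SimpleGraph.deleteEdges_adj] at hadj
  obtain ⟨hGst, hne'⟩ := hadj
  have hstvw : s(s, t) ≠ s(j.succ, w) := fun h => hne' (Set.mem_singleton_iff.mpr h)
  rcases hGst.2 with h | h
  · -- parG s = t
    by_cases hs : s = j.succ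
    · subst hs
      rw [hp] at h
      exact hstvw (by rw [← h])
    · exact htS (h ▸ parG_mem_DS F hsS hs)
  · -- parG t = s
    have ht0 : t ≠ 0 := by
      rintro rfl
      rw [parG_zero] at h
      exact zero_not_mem_DS F j (h ▸ hsS)
    exact htS (mem_DS_of_parG F ht0 (h.symm ▸ hsS))

lemma isTree : (graph F).IsTree := by
  refine ⟨connected F, SimpleGraph.isAcyclic_iff_forall_adj_isBridge.mpr ?_⟩
  intro v w hadj
  rcases hadj.2 with h | h
  · exact bridge_of_par F h hadj.1
  · rw [Sym2.eq_swap]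
    exact bridge_of_par F h hadj.1.symm

lemma par0_min {u p x : Fin n} (h : par0 F u = some p) (hx : fle F u x) (hne : x ≠ u) :
    fle F p x :=
  (par0_some F h).2 x ((mem_strictAnc F).mpr ⟨hx, hne⟩)

lemma par0_le {u p : Fin n} (h : par0 F u = some p) : fle F u p ∧ p ≠ u :=
  (mem_strictAnc F).mp (par0_some F h).1

/-- decode an edge of `graph F` -/
lemma adj_cases {x y : Fin (n + 1)} (h : (graph F).Adj x y) (hx : x ≠ 0) (hy : y ≠ 0) :
    ∃ u p : Fin n, par0 F u = some p ∧
      ((x = u.succ ∧ y = p.succ) ∨ (x = p.succ ∧ y = u.succ)) := by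
  obtain ⟨i, rfl⟩ := Fin.exists_succ_eq.mpr hx
  obtain ⟨j, rfl⟩ := Fin.exists_succ_eq.mpr hy
  rcases h.2 with hp | hp
  · cases hq : par0 F i with
    | none => rw [parG_succ_none F hq] at hp; exact absurd hp.symm (Fin.succ_ne_zero j)
    | some q =>
        rw [parG_succ_some F hq] at hp
        exact ⟨i, q, hq, Or.inl ⟨rfl, hp.symm⟩⟩
  · cases hq : par0 F j with
    | none => rw [parG_succ_none F hq] at hp; exact absurd hp.symm (Fin.succ_ne_zero i)
    | some q =>
        rw [parG_succ_some F hq] at hp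
        exact ⟨j, q, hq, Or.inr ⟨hp.symm, rfl⟩⟩

lemma noncross : ∀ a b c d : Fin (n + 1), (graph F).Adj a b → (graph F).Adj c d →
    a < c → c < b → b < d → False := by
  intro a b c d hab hcd hac hcb hbd
  -- c, b, d are nonzero
  have hc0 : c ≠ 0 := Fin.pos_iff_ne_zero.mp (lt_of_le_of_lt (Fin.zero_le a) hac)
  have hb0 : b ≠ 0 := Fin.pos_iff_ne_zero.mp (lt_of_le_of_lt (Fin.zero_le c) hcb)
  have hd0 : d ≠ 0 := Fin.pos_iff_ne_zero.mp (lt_of_le_of_lt (Fin.zero_le b) hbd)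
  obtain ⟨c', rfl⟩ := Fin.exists_succ_eq.mpr hc0
  obtain ⟨b', rfl⟩ := Fin.exists_succ_eq.mpr hb0
  obtain ⟨d', rfl⟩ := Fin.exists_succ_eq.mpr hd0
  obtain ⟨u2, p2, hu2, hcase2⟩ := adj_cases F hcd hc0 hd0
  -- fle c' p2, fle d' p2
  have hu2p2 : fle F u2 p2 := (par0_le F hu2).1
  have hp2 : (u2 = c' ∧ p2 = d') ∨ (p2 = c' ∧ u2 = d') := by
    rcases hcase2 with ⟨h1, h2⟩ | ⟨h1, h2⟩ <;> rw [Fin.succ_inj] at h1 h2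
    · exact Or.inl ⟨h1.symm, h2.symm⟩
    · exact Or.inr ⟨h1.symm, h2.symm⟩
  have hcb' : c' < b' := by rwa [Fin.succ_lt_succ_iff] at hcb
  have hbd' : b' < d' := by rwa [Fin.succ_lt_succ_iff] at hbd
  have hfc : fle F c' p2 ∧ fle F d' p2 := by
    rcases hp2 with ⟨h1, h2⟩ | ⟨h1, h2⟩
    · rw [← h1, ← h2]; exact ⟨hu2p2, fle_refl F _⟩
    · rw [← h1, ← h2]; exact ⟨fle_refl F _, hu2p2⟩
  have hbp2 : fle F b' p2 := fle_interval F hfc.1 hfc.2 hcb'.le hbd'.le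
  have hbne2 : b' ≠ p2 := by
    rcases hp2 with ⟨-, h2⟩ | ⟨h2, -⟩
    · rw [← h2] at hbd'; exact hbd'.ne
    · rw [← h2] at hcb'; exact hcb'.ne'
  -- now analyse the edge a-b
  by_cases ha0 : a = 0
  · -- b is a root
    subst ha0
    have hroot : par0 F b' = none := by
      cases hq : par0 F b' with
      | none => rfl
      | some q =>
          exfalso
          rcases hab.2 with hp | hp
          · rw [parG_zero] at hp; exact (Fin.succ_ne_zero b') hp.symm
          · rw [parG_succ_some F hq] at hp; exact (Fin.succ_ne_zero q) hp
    have : p2 ∈ strictAnc F b' := (mem_strictAnc F).mpr ⟨hbp2, fun h => hbne2 h.symm⟩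
    rw [par0_none F hroot] at this
    simp at this
  · -- edge a-b inside the forest
    obtain ⟨a', rfl⟩ := Fin.exists_succ_eq.mpr ha0
    obtain ⟨u1, p1, hu1, hcase1⟩ := adj_cases F hab ha0 hb0
    have hp1 : (u1 = a' ∧ p1 = b') ∨ (p1 = a' ∧ u1 = b') := by
      rcases hcase1 with ⟨h1, h2⟩ | ⟨h1, h2⟩ <;> rw [Fin.succ_inj] at h1 h2
      · exact Or.inl ⟨h1.symm, h2.symm⟩
      · exact Or.inr ⟨h1.symm, h2.symm⟩
    have hu1p1 : fle F u1 p1 := (par0_le F hu1).1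
    have hac' : a' < c' := by rwa [Fin.succ_lt_succ_iff] at hac
    have hfa : fle F a' p1 ∧ fle F b' p1 := by
      rcases hp1 with ⟨h1, h2⟩ | ⟨h1, h2⟩
      · rw [← h1, ← h2]; exact ⟨hu1p1, fle_refl F _⟩
      · rw [← h1, ← h2]; exact ⟨fle_refl F _, hu1p1⟩
    have hcp1 : fle F c' p1 := fle_interval F hfa.1 hfa.2 hac'.le hcb'.le
    have hcne1 : c' ≠ p1 := by
      rcases hp1 with ⟨-, h2⟩ | ⟨h2, -⟩
      · rw [← h2] at hcb'; exact hcb'.ne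
      · rw [← h2] at hac'; exact hac'.ne'
    have hbp1 : fle F b' p1 := hfa.2
    have hp1p2 : p1 ≠ p2 := by
      rcases hp1 with ⟨-, h1⟩ | ⟨h1, -⟩ <;> rcases hp2 with ⟨-, h2⟩ | ⟨h2, -⟩ <;>
        rw [h1, h2] <;> intro h
      · exact hbd'.ne h
      · exact hcb'.ne' h
      · exact (hac'.trans (hcb'.trans hbd')).ne h
      · exact hac'.ne h
    rcases fle_chain F hbp1 hbp2 with h12 | h21
    · -- fle p1 p2
      rcases hp2 with ⟨h1, h2⟩ | ⟨h2, h1⟩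
      · -- u2 = c'
        rw [← h1] at hcp1 hcne1
        have := par0_min F hu2 hcp1 (fun h => hcne1 h.symm)
        exact hp1p2 (fle_antisymm F h12 this)
      · -- p2 = c'
        rw [← h2] at hcp1
        exact hp1p2 (fle_antisymm F h12 hcp1)
    · -- fle p2 p1
      rcases hp1 with ⟨h1, h2⟩ | ⟨h2, h1⟩
      · -- u1 = a', p1 = b'
        rw [← h2] at hbp2 hbne2
        exact hbne2 (fle_antisymm F hbp2 h21)
      · -- u1 = b'
        rw [← h1] at hbp2 hbne2
        have := par0_min F hu1 hbp2 (fun h => hbne2 h.symm)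
        exact hp1p2 (fle_antisymm F this h21)

def toNCTree : NCTree n := ⟨graph F, isTree F, noncross F⟩

lemma par0_eq_none_of_empty {i : Fin n} (h : strictAnc F i = ∅) : par0 F i = none := by
  unfold par0
  split
  · next hex =>
      obtain ⟨m, hm, -⟩ := hex
      rw [h] at hm
      simp at hm
  · rfl

lemma par0_eq_some {i m : Fin n} (hm : m ∈ strictAnc F i)
    (hmin : ∀ x ∈ strictAnc F i, fle F m x) : par0 F i = some m := by
  cases hp : par0 F i with
  | none => rw [par0_none F hp] at hm; simp at hm
  | some q =>
      obtain ⟨hq, hqmin⟩ := par0_some F hp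
      have := fle_antisymm F (hmin q hq) (hqmin m hm)
      rw [this]

noncomputable def chainWalk : (x : Fin (n + 1)) → (graph F).Walk x 0
  | x =>
    if hx : x = 0 then hx ▸ SimpleGraph.Walk.nil
    else SimpleGraph.Walk.cons (adj_parG F hx) (chainWalk (parG F x))
termination_by x => meas F x
decreasing_by exact meas_parG_lt F hx

lemma chainWalk_zero : chainWalk F 0 = SimpleGraph.Walk.nil := by
  rw [chainWalk]
  simp

lemma chainWalk_succ {x : Fin (n + 1)} (hx : x ≠ 0) :
    chainWalk F x = SimpleGraph.Walk.cons (adj_parG F hx) (chainWalk F (parG F x)) := by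
  rw [chainWalk]
  simp [hx]

lemma meas_le_zero {x : Fin (n + 1)} (h : meas F x ≤ 0) : x = 0 := by
  by_contra hx
  obtain ⟨k, rfl⟩ := Fin.exists_succ_eq.mpr hx
  simp [meas] at h

lemma chainWalk_support_aux : ∀ (N : ℕ) (x : Fin (n + 1)), meas F x ≤ N → ∀ (z : Fin (n + 1)),
    (z ∈ (chainWalk F x).support ↔
      (z = 0 ∨ ∃ i j : Fin n, x = i.succ ∧ z = j.succ ∧ fle F i j)) := by
  intro N
  induction N with
  | zero =>
      intro x hx z
      have := meas_le_zero F hx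
      subst this
      rw [chainWalk_zero]
      simp only [SimpleGraph.Walk.support_nil, List.mem_singleton]
      constructor
      · intro h; exact Or.inl h
      · rintro (h | ⟨i, j, hi, -, -⟩)
        · exact h
        · exact absurd hi.symm (Fin.succ_ne_zero i)
  | succ N ih =>
      intro x hx z
      by_cases hx0 : x = 0
      · subst hx0
        rw [chainWalk_zero]
        simp only [SimpleGraph.Walk.support_nil, List.mem_singleton]
        constructor
        · intro h; exact Or.inl h
        · rintro (h | ⟨i, j, hi, -, -⟩)
          · exact h
          · exact absurd hi.symm (Fin.succ_ne_zero i)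
      · have hm : meas F (parG F x) ≤ N :=
          Nat.lt_succ_iff.mp (lt_of_lt_of_le (meas_parG_lt F hx0) hx)
        obtain ⟨k, rfl⟩ := Fin.exists_succ_eq.mpr hx0
        rw [chainWalk_succ F hx0, SimpleGraph.Walk.support_cons, List.mem_cons,
          ih (parG F k.succ) hm z]
        constructor
        · rintro (rfl | h | ⟨i, j, hpi, rfl, hij⟩)
          · exact Or.inr ⟨k, k, rfl, rfl, fle_refl F k⟩
          · exact Or.inl h
          · cases hq : par0 F k with
            | none => rw [parG_succ_none F hq] at hpi; exact absurd hpi.symm (Fin.succ_ne_zero i)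
            | some p =>
                rw [parG_succ_some F hq, Fin.succ_inj] at hpi
                subst hpi
                exact Or.inr ⟨k, j, rfl, rfl, fle_trans F (par0_le F hq).1 hij⟩
        · rintro (rfl | ⟨i, j, hik, rfl, hij⟩)
          · exact Or.inr (Or.inl rfl)
          · rw [Fin.succ_inj] at hik
            rw [← hik] at hij
            by_cases hji : j = k
            · subst hji; exact Or.inl rfl
            · obtain ⟨p, hp, -, -, hpj⟩ := par0_of_strict F hij hji
              exact Or.inr (Or.inr ⟨p, j, parG_succ_some F hp, rfl, hpj⟩)

lemma chainWalk_support {x z : Fin (n + 1)} :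
    z ∈ (chainWalk F x).support ↔
      (z = 0 ∨ ∃ i j : Fin n, x = i.succ ∧ z = j.succ ∧ fle F i j) :=
  chainWalk_support_aux F (meas F x) x le_rfl z

lemma chainWalk_isPath_aux : ∀ (N : ℕ) (x : Fin (n + 1)), meas F x ≤ N →
    (chainWalk F x).IsPath := by
  intro N
  induction N with
  | zero =>
      intro x hx
      have := meas_le_zero F hx
      subst this
      rw [chainWalk_zero]
      exact SimpleGraph.Walk.IsPath.nil
  | succ N ih =>
      intro x hx
      by_cases hx0 : x = 0
      · subst hx0; rw [chainWalk_zero]; exact SimpleGraph.Walk.IsPath.nil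
      · have hm : meas F (parG F x) ≤ N :=
          Nat.lt_succ_iff.mp (lt_of_lt_of_le (meas_parG_lt F hx0) hx)
        obtain ⟨k, rfl⟩ := Fin.exists_succ_eq.mpr hx0
        rw [chainWalk_succ F hx0, SimpleGraph.Walk.cons_isPath_iff]
        refine ⟨ih _ hm, ?_⟩
        rw [chainWalk_support F]
        rintro (h | ⟨i, j, hpi, hkj, hij⟩)
        · exact hx0 h
        · rw [Fin.succ_inj] at hkj
          subst hkj
          cases hq : par0 F k with
          | none => rw [parG_succ_none F hq] at hpi; exact absurd hpi.symm (Fin.succ_ne_zero i)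
          | some p =>
              rw [parG_succ_some F hq, Fin.succ_inj] at hpi
              subst hpi
              obtain ⟨hkp, hpk⟩ := par0_le F hq
              exact hpk (fle_antisymm F hij hkp)

lemma chainWalk_isPath (x : Fin (n + 1)) : (chainWalk F x).IsPath :=
  chainWalk_isPath_aux F (meas F x) x le_rfl

end Forest

open SimpleGraph Walk in
/-- junction lemma: take and drop parts of a path meet only at the splitting vertex -/
lemma junction {V : Type*} {G : SimpleGraph V} [DecidableEq V] {u w z : V} {P : G.Walk u w}
    (hP : P.IsPath) (hz : z ∈ P.support) {x : V}
    (h1 : x ∈ (P.takeUntil z hz).support) (h2 : x ∈ (P.dropUntil z hz).support) : x = z := by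
  by_contra hne
  have hnd := hP.2
  rw [← Walk.take_spec P hz, Walk.support_append, List.nodup_append] at hnd
  have h2' : x ∈ (P.dropUntil z hz).support.tail := by
    have hcons := Walk.support_eq_cons (P.dropUntil z hz)
    rw [hcons, List.mem_cons] at h2
    exact h2.resolve_left hne
  exact hnd.2.2 x h1 x h2' rfl

section Tree
variable (T : NCTree n)

noncomputable def pathTo (v : Fin (n + 1)) : (T.1).Walk v 0 :=
  (T.2.1.existsUnique_path v 0).choose

lemma pathTo_isPath (v : Fin (n + 1)) : (pathTo T v).IsPath :=
  (T.2.1.existsUnique_path v 0).choose_spec.1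

lemma pathTo_unique {v : Fin (n + 1)} (p : (T.1).Walk v 0) (hp : p.IsPath) : p = pathTo T v :=
  (T.2.1.existsUnique_path v 0).choose_spec.2 p hp

lemma pathTo_drop {v z : Fin (n + 1)} (hz : z ∈ (pathTo T v).support) :
    pathTo T z = (pathTo T v).dropUntil z hz :=
  (pathTo_unique T _ ((pathTo_isPath T v).dropUntil hz)).symm

noncomputable def tle (i j : Fin n) : Bool := decide (j.succ ∈ (pathTo T i.succ).support)

lemma tle_iff {i j : Fin n} : tle T i j = true ↔ j.succ ∈ (pathTo T i.succ).support := by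
  simp [tle]

lemma tle_refl (i : Fin n) : tle T i i = true :=
  (tle_iff T).mpr (SimpleGraph.Walk.start_mem_support _)

lemma tle_trans {i j k : Fin n} (h : tle T i j = true) (h' : tle T j k = true) :
    tle T i k = true := by
  rw [tle_iff] at h h' ⊢
  rw [pathTo_drop T h] at h'
  exact SimpleGraph.Walk.support_dropUntil_subset _ _ h'

lemma tle_antisymm {i j : Fin n} (h : tle T i j = true) (h' : tle T j i = true) : i = j := by
  rw [tle_iff] at h h'
  rw [pathTo_drop T h] at h'
  have := junction (pathTo_isPath T i.succ) h (SimpleGraph.Walk.start_mem_support _) h'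
  exact Fin.succ_injective n this

/-- if `z` lies on the segment from `v` to `w` of the path from `v` to the root,
then `w` lies on the path from `z` to the root. -/
lemma mem_pathTo_of_mem_take {v w z : Fin (n + 1)} (hw : w ∈ (pathTo T v).support)
    (hz : z ∈ ((pathTo T v).takeUntil w hw).support) : w ∈ (pathTo T z).support := by
  have hTkP : ((pathTo T v).takeUntil w hw).IsPath := (pathTo_isPath T v).takeUntil hw
  have hDP : ((pathTo T v).dropUntil w hw).IsPath := (pathTo_isPath T v).dropUntil hw
  have hAP : (((pathTo T v).takeUntil w hw).dropUntil z hz).IsPath := hTkP.dropUntil hz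
  have hW : ((((pathTo T v).takeUntil w hw).dropUntil z hz).append
      ((pathTo T v).dropUntil w hw)).IsPath := by
    rw [SimpleGraph.Walk.isPath_def, SimpleGraph.Walk.support_append, List.nodup_append]
    refine ⟨hAP.2, hDP.2.tail, ?_⟩
    intro x hx _ hx' rfl
    have hxTk : x ∈ ((pathTo T v).takeUntil w hw).support :=
      SimpleGraph.Walk.support_dropUntil_subset _ _ hx
    have hnd := (pathTo_isPath T v).2
    rw [← SimpleGraph.Walk.take_spec (pathTo T v) hw, SimpleGraph.Walk.support_append,
      List.nodup_append] at hnd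
    exact hnd.2.2 x hxTk x hx' rfl
  have heq : pathTo T z = _ := (pathTo_unique T _ hW).symm
  rw [heq, SimpleGraph.Walk.mem_support_append_iff]
  exact Or.inl (SimpleGraph.Walk.end_mem_support _)

lemma tle_chain {i j k : Fin n} (h : tle T i j = true) (h' : tle T i k = true) :
    tle T j k = true ∨ tle T k j = true := by
  rw [tle_iff] at h h'
  set P := pathTo T i.succ
  have hsplit : k.succ ∈ (P.takeUntil j.succ h).support ∨
      k.succ ∈ (P.dropUntil j.succ h).support := by
    rcases (by rwa [← Walk.take_spec P h, Walk.support_append, List.mem_append] at h' :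
      k.succ ∈ (P.takeUntil j.succ h).support ∨
        k.succ ∈ (P.dropUntil j.succ h).support.tail) with hh | hh
    · exact Or.inl hh
    · exact Or.inr (List.mem_of_mem_tail hh)
  rcases hsplit with hh | hh
  · exact Or.inr ((tle_iff T).mpr (mem_pathTo_of_mem_take T h hh))
  · left
    rw [tle_iff, pathTo_drop T h]
    exact hh

lemma not_S_of_mem_pathTo {b : Fin (n + 1)} {i : Fin n} (hb : i.succ ∉ (pathTo T b).support)
    {z : Fin (n + 1)} (hz : z ∈ (pathTo T b).support) : i.succ ∉ (pathTo T z).support := by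
  intro hS
  rw [pathTo_drop T hz] at hS
  exact hb (SimpleGraph.Walk.support_dropUntil_subset _ _ hS)

lemma tle_interval {i a b c : Fin n} (ha : tle T a i = true) (hc : tle T c i = true)
    (hab : a ≤ b) (hbc : b ≤ c) : tle T b i = true := by
  rcases eq_or_lt_of_le hab with rfl | hab
  · exact ha
  rcases eq_or_lt_of_le hbc with rfl | hbc
  · exact hc
  by_contra hB
  rw [tle_iff] at ha hc
  have hB' : i.succ ∉ (pathTo T b.succ).support := fun h => hB ((tle_iff T).mpr h)
  -- the path from b.succ to 0 leaves the open arc (a.succ, c.succ)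
  have hstart : a.succ < b.succ ∧ b.succ < c.succ :=
    ⟨Fin.succ_lt_succ_iff.mpr hab, Fin.succ_lt_succ_iff.mpr hbc⟩
  have hend : ¬ (a.succ < (0 : Fin (n+1)) ∧ (0 : Fin (n+1)) < c.succ) := by
    rintro ⟨h, -⟩
    exact absurd h (by simp [Fin.lt_iff_val_lt_val])
  obtain ⟨s, t, hst, hsR, htR, hsin, htin⟩ :=
    exists_boundary (fun z => a.succ < z ∧ z < c.succ) (pathTo T b.succ) hstart hend
  have hsS : i.succ ∉ (pathTo T s).support := not_S_of_mem_pathTo T hB' hsR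
  have htS : i.succ ∉ (pathTo T t).support := not_S_of_mem_pathTo T hB' htR
  -- the path from a.succ to i.succ to c.succ stays in S
  set Q := ((pathTo T a.succ).takeUntil i.succ ha).append
    ((pathTo T c.succ).takeUntil i.succ hc).reverse with hQdef
  have hQS : ∀ z ∈ Q.support, i.succ ∈ (pathTo T z).support := by
    intro z hz
    rw [hQdef, SimpleGraph.Walk.mem_support_append_iff] at hz
    rcases hz with hz | hz
    · exact mem_pathTo_of_mem_take T ha hz
    · rw [SimpleGraph.Walk.support_reverse, List.mem_reverse] at hz
      exact mem_pathTo_of_mem_take T hc hz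
  have hsQ : s ∉ Q.support := fun h => hsS (hQS s h)
  have htQ : t ∉ Q.support := fun h => htS (hQS t h)
  have hsa : s ≠ a.succ := fun h => hsS (h ▸ ha)
  have hsc : s ≠ c.succ := fun h => hsS (h ▸ hc)
  have hta : t ≠ a.succ := fun h => htS (h ▸ ha)
  have htc : t ≠ c.succ := fun h => htS (h ▸ hc)
  have hNC := T.2.2
  -- t is outside the closed arc
  have htout : t < a.succ ∨ c.succ < t := by
    rcases lt_trichotomy t a.succ with h | h | h
    · exact Or.inl h
    · exact absurd h hta
    rcases lt_trichotomy t c.succ with h' | h' | h'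
    · exact absurd ⟨h, h'⟩ htin
    · exact absurd h' htc
    · exact Or.inr h'
  rcases htout with hlt | hgt
  · -- chord (t, s), with t < s ; a.succ inside, c.succ outside
    obtain ⟨p, q, hpq, hpQ, hqQ, hpin, hqin⟩ :=
      exists_boundary (fun z => t < z ∧ z < s) Q
        ⟨hlt, hsin.1⟩ (fun h => absurd (hsin.2.trans h.2) (lt_irrefl _))
    have hpS := hQS p hpQ
    have hqS := hQS q hqQ
    have hqs : q ≠ s := fun h => hsS (h ▸ hqS)
    have hqt : q ≠ t := fun h => htS (h ▸ hqS)
    have hqout : q < t ∨ s < q := by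
      rcases lt_trichotomy q t with h | h | h
      · exact Or.inl h
      · exact absurd h hqt
      rcases lt_trichotomy q s with h' | h' | h'
      · exact absurd ⟨h, h'⟩ hqin
      · exact absurd h' hqs
      · exact Or.inr h'
    rcases hqout with h | h
    · exact hNC q p t s hpq.symm (hst.symm) h hpin.1 hpin.2
    · exact hNC t s p q hst.symm hpq hpin.1 hpin.2 h
  · -- chord (s, t), with s < t ; c.succ inside, a.succ outside
    obtain ⟨p, q, hpq, hpQ, hqQ, hpin, hqin⟩ :=
      exists_boundary (fun z => s < z ∧ z < t) Q.reverse
        ⟨hsin.2, hgt⟩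
        (fun h => absurd (h.1.trans hsin.1) (lt_irrefl _))
    rw [SimpleGraph.Walk.support_reverse, List.mem_reverse] at hpQ hqQ
    have hpS := hQS p hpQ
    have hqS := hQS q hqQ
    have hqs : q ≠ s := fun h => hsS (h ▸ hqS)
    have hqt : q ≠ t := fun h => htS (h ▸ hqS)
    have hqout : q < s ∨ t < q := by
      rcases lt_trichotomy q s with h | h | h
      · exact Or.inl h
      · exact absurd h hqs
      rcases lt_trichotomy q t with h' | h' | h'
      · exact absurd ⟨h, h'⟩ hqin
      · exact absurd h' hqt
      · exact Or.inr h'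
    rcases hqout with h | h
    · exact hNC q p s t hpq.symm hst h hpin.1 hpin.2
    · exact hNC s t p q hst hpq hpin.1 hpin.2 h

noncomputable def toNIForest : NIForest n :=
  ⟨tle T, tle_refl T, fun i j => tle_antisymm T, fun i j k => tle_trans T,
    fun i j k => tle_chain T, fun i a b c ha hc h1 h2 => tle_interval T ha hc h1 h2⟩

lemma pathTo_zero : pathTo T 0 = SimpleGraph.Walk.nil :=
  (pathTo_unique T SimpleGraph.Walk.nil SimpleGraph.Walk.IsPath.nil).symm

lemma parG_toNIForest {x y : Fin (n + 1)} (h : (T.1).Adj x y) {q : (T.1).Walk y 0}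
    (hq : pathTo T x = SimpleGraph.Walk.cons h q) :
    parG (toNIForest T) x = y := by
  have hx0 : x ≠ 0 := by
    rintro rfl
    rw [pathTo_zero] at hq
    exact SimpleGraph.Walk.not_nil_cons (hq ▸ SimpleGraph.Walk.nil_nil)
  obtain ⟨i, rfl⟩ := Fin.exists_succ_eq.mpr hx0
  have hPp := pathTo_isPath T i.succ
  rw [hq, SimpleGraph.Walk.cons_isPath_iff] at hPp
  have hqPT : q = pathTo T y := pathTo_unique T q hPp.1
  by_cases hy : y = 0
  · subst hy
    have hnil : q = SimpleGraph.Walk.nil := by rw [hqPT, pathTo_zero]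
    subst hnil
    have hemp : strictAnc (toNIForest T) i = ∅ := by
      apply Finset.eq_empty_of_forall_notMem
      intro j hj
      obtain ⟨hij, hji⟩ := (mem_strictAnc _).mp hj
      have : j.succ ∈ (pathTo T i.succ).support := (tle_iff T).mp hij
      rw [hq] at this
      simp only [SimpleGraph.Walk.support_cons, SimpleGraph.Walk.support_nil,
        List.mem_cons, List.mem_singleton] at this
      rcases this with h1 | h1 | h1
      · exact hji (Fin.succ_injective n h1)
      · exact Fin.succ_ne_zero j h1
      · simp at h1
    rw [parG_succ_none _ (par0_eq_none_of_empty _ hemp)]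
  · obtain ⟨k, rfl⟩ := Fin.exists_succ_eq.mpr hy
    have hik : k ∈ strictAnc (toNIForest T) i := by
      apply (mem_strictAnc _).mpr
      constructor
      · show tle T i k = true
        rw [tle_iff, hq, SimpleGraph.Walk.support_cons]
        exact List.mem_cons_of_mem _ (SimpleGraph.Walk.start_mem_support q)
      · intro hki
        exact h.ne (by rw [hki])
    have hmin : ∀ j ∈ strictAnc (toNIForest T) i, fle (toNIForest T) k j := by
      intro j hj
      obtain ⟨hij, hji⟩ := (mem_strictAnc _).mp hj
      have hmem : j.succ ∈ (pathTo T i.succ).support := (tle_iff T).mp hij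
      rw [hq, SimpleGraph.Walk.support_cons, List.mem_cons] at hmem
      rcases hmem with h1 | h1
      · exact absurd (Fin.succ_injective n h1) hji
      · show tle T k j = true
        rw [tle_iff, ← hqPT]
        exact h1
    rw [parG_succ_some _ (par0_eq_some _ hik hmin)]

lemma right_inv (T : NCTree n) : toNCTree (toNIForest T) = T := by
  apply Subtype.ext
  show graph (toNIForest T) = T.1
  ext x y
  constructor
  · rintro ⟨hne, hpar | hpar⟩
    · have hx0 : x ≠ 0 := by
        rintro rfl
        rw [parG_zero] at hpar
        exact hne hpar
      have hnn : ¬ (pathTo T x).Nil := by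
        intro hnil
        exact hx0 hnil.eq
      obtain ⟨u, hadj, q, hdec⟩ := SimpleGraph.Walk.not_nil_iff.mp hnn
      have := parG_toNIForest T hadj hdec
      rw [hpar] at this
      subst this
      exact hadj
    · have hy0 : y ≠ 0 := by
        rintro rfl
        rw [parG_zero] at hpar
        exact hne hpar.symm
      have hnn : ¬ (pathTo T y).Nil := by
        intro hnil
        exact hy0 hnil.eq
      obtain ⟨u, hadj, q, hdec⟩ := SimpleGraph.Walk.not_nil_iff.mp hnn
      have := parG_toNIForest T hadj hdec
      rw [hpar] at this
      subst this
      exact hadj.symm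
  · intro hadj
    refine ⟨hadj.ne, ?_⟩
    by_cases hx : x ∈ (pathTo T y).support
    · right
      have hy0 : y ≠ 0 := by
        rintro rfl
        rw [pathTo_zero] at hx
        simp only [SimpleGraph.Walk.support_nil, List.mem_singleton] at hx
        exact hadj.ne hx
      have hsingle : (pathTo T y).takeUntil x hx = SimpleGraph.Walk.cons hadj.symm .nil := by
        have h1 : (⟨(pathTo T y).takeUntil x hx, (pathTo_isPath T y).takeUntil hx⟩ :
            (T.1).Path y x) = ⟨SimpleGraph.Walk.cons hadj.symm .nil, by
              rw [SimpleGraph.Walk.cons_isPath_iff]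
              exact ⟨SimpleGraph.Walk.IsPath.nil, by simp [hadj.ne.symm]⟩⟩ :=
          T.2.1.IsAcyclic.path_unique _ _
        exact congrArg Subtype.val h1
      have hdec : pathTo T y = SimpleGraph.Walk.cons hadj.symm ((pathTo T y).dropUntil x hx) := by
        conv_lhs => rw [← SimpleGraph.Walk.take_spec (pathTo T y) hx]
        rw [hsingle]
        simp [SimpleGraph.Walk.cons_append, SimpleGraph.Walk.nil_append]
      exact parG_toNIForest T hadj.symm hdec
    · left
      have hW : (SimpleGraph.Walk.cons hadj (pathTo T y)).IsPath := by
        rw [SimpleGraph.Walk.cons_isPath_iff]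
        exact ⟨pathTo_isPath T y, hx⟩
      have hdec : pathTo T x = SimpleGraph.Walk.cons hadj (pathTo T y) :=
        (pathTo_unique T _ hW).symm
      exact parG_toNIForest T hadj hdec

end Tree

lemma bool_ext {a b : Bool} (h : (a = true) ↔ (b = true)) : a = b := by
  cases a <;> cases b <;> simp_all

lemma left_inv (F : NIForest n) : toNIForest (toNCTree F) = F := by
  apply Subtype.ext
  funext i j
  apply bool_ext
  show tle (toNCTree F) i j = true ↔ F.1 i j = true
  rw [tle_iff]
  have hpath : chainWalk F i.succ = pathTo (toNCTree F) i.succ :=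
    pathTo_unique (toNCTree F) (chainWalk F i.succ) (chainWalk_isPath F i.succ)
  rw [← hpath]
  refine (chainWalk_support F).trans ?_
  constructor
  · rintro (h | ⟨i', j', hi, hj, hij⟩)
    · exact absurd h (Fin.succ_ne_zero j)
    · rw [Fin.succ_inj] at hi hj
      rw [hi, hj]
      exact hij
  · intro h
    exact Or.inr ⟨i, j, rfl, rfl, h⟩

noncomputable def forestEquivTree (n : ℕ) : NIForest n ≃ NCTree n where
  toFun := toNCTree
  invFun := toNIForest
  left_inv := left_inv
  right_inv := right_inv

end NINC

/-- Non-interleaving forests on `{1,…,n}` and non-crossing trees on `n+1` points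
of a circle are equinumerous. -/
theorem card_NIForest_eq_card_NCTree (n : ℕ) (hn : 1 ≤ n) :
    Nat.card (NIForest n) = Nat.card (NCTree n) :=
  Nat.card_congr (NINC.forestEquivTree n)
end

section
/- In the free magmatic algebra with two binary operations ≺ and ≻ subject to the single relation (x≻y)≺z = x≻(y≺z), the dimension of the component of arity n (multilinear part on one generator, or equivalently the number of basis monomials with n leaves in the free algebra on one generator) equals the number of bicolored complete binary trees with n leaves having no right edge from a ≻-colored vertex to a ≺-colored vertex; for n = 1,2,3,4,5 these numbers are 1, 2, 7, 30, 143. -/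
/-- Monomials of the free algebra on one generator `x` with two binary operations
`≺` (constructor `p`) and `≻` (constructor `s`): complete binary trees whose
internal vertices are bicolored by `≺`/`≻`. -/
inductive LTerm : Type
  | x : LTerm
  | p : LTerm → LTerm → LTerm
  | s : LTerm → LTerm → LTerm

/-- Number of leaves of a monomial. -/
def LTerm.leaves : LTerm → ℕ
  | .x => 1
  | .p a b => a.leaves + b.leaves
  | .s a b => a.leaves + b.leaves

/-- One rewriting step: the defining relation `(a ≻ b) ≺ c = a ≻ (b ≺ c)`
applied in any context (congruence). -/
inductive LStep : LTerm → LTerm → Prop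
  | base (a b c : LTerm) : LStep (.p (.s a b) c) (.s a (.p b c))
  | pl {a a' : LTerm} (b : LTerm) : LStep a a' → LStep (.p a b) (.p a' b)
  | pr (a : LTerm) {b b' : LTerm} : LStep b b' → LStep (.p a b) (.p a b')
  | sl {a a' : LTerm} (b : LTerm) : LStep a a' → LStep (.s a b) (.s a' b)
  | sr (a : LTerm) {b b' : LTerm} : LStep b b' → LStep (.s a b) (.s a b')

/-- Is the top operation `≺` ? -/
def LTerm.isP : LTerm → Prop
  | .p _ _ => True
  | _ => False

/-- A monomial avoids the forbidden configuration: no right edge from a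
`≻`-colored vertex to a `≺`-colored vertex. -/
def LTerm.Avoids : LTerm → Prop
  | .x => True
  | .p a b => a.Avoids ∧ b.Avoids
  | .s a b => a.Avoids ∧ b.Avoids ∧ ¬ b.isP

/-- Dimension of the arity-`n` (i.e. `n`-leaves) component of the free algebra
with operations `≺, ≻` subject to `(x≻y)≺z = x≻(y≺z)`: the number of monomials
with `n` leaves modulo the congruence generated by the relation. -/
noncomputable def LDim (n : ℕ) : ℕ :=
  Nat.card (Quotient (Setoid.comap (Subtype.val : {t : LTerm // t.leaves = n} → LTerm)
    (Relation.EqvGen.setoid LStep)))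

/-- Number of bicolored complete binary trees with `n` leaves avoiding right
edges from `≻` to `≺`. -/
noncomputable def AvoidCount (n : ℕ) : ℕ :=
  Nat.card {t : LTerm // t.leaves = n ∧ t.Avoids}

/-! Orient the relation as `a ≻ (b ≺ c) ⟶ (a ≻ b) ≺ c`: its normal forms are exactly the avoiding
trees. The normal form is computed bottom-up (`normalForm`), is congruent to its argument, and is
invariant under each rewriting step, so it is a complete invariant of the congruence classes.
The small values are obtained by enumerating all trees level by level. -/

deriving instance DecidableEq for LTerm

open Relation

theorem Relation.EqvGen.map {α β : Type*} {r : α → α → Prop} {s : β → β → Prop} {f : α → β}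
    (hf : ∀ a b, r a b → s (f a) (f b)) {a b : α} (h : EqvGen r a b) : EqvGen s (f a) (f b) :=
  Setoid.eqvGen_le (s := (EqvGen.setoid s).comap f) (fun a b hab => EqvGen.rel _ _ (hf a b hab)) h

namespace LTerm

theorem one_le_leaves (t : LTerm) : 1 ≤ t.leaves := by
  induction t <;> simp only [leaves] <;> omega

/-- The normal form of `a ≻ b` for `a`, `b` in normal form. -/
def succNF (a : LTerm) : LTerm → LTerm
  | p u v => p (succNF a u) v
  | b => s a b

def normalForm : LTerm → LTerm
  | x => x
  | p a b => p a.normalForm b.normalForm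
  | s a b => succNF a.normalForm b.normalForm

theorem leaves_succNF (a b : LTerm) : (succNF a b).leaves = a.leaves + b.leaves := by
  induction b with
  | p u v ih _ => simp only [succNF, leaves, ih]; omega
  | _ => rfl

theorem leaves_normalForm (t : LTerm) : t.normalForm.leaves = t.leaves := by
  induction t with
  | x => rfl
  | p a b ha hb => simp only [normalForm, leaves, ha, hb]
  | s a b ha hb => simp only [normalForm, leaves_succNF, leaves, ha, hb]

theorem avoids_succNF {a b : LTerm} (ha : a.Avoids) (hb : b.Avoids) : (succNF a b).Avoids := by
  induction b with
  | x => exact ⟨ha, trivial, id⟩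
  | p u v hu _ => exact ⟨hu hb.1, hb.2⟩
  | s u v => exact ⟨ha, hb, id⟩

theorem avoids_normalForm (t : LTerm) : t.normalForm.Avoids := by
  induction t with
  | x => trivial
  | p a b ha hb => exact ⟨ha, hb⟩
  | s a b ha hb => exact avoids_succNF ha hb

theorem succNF_of_not_isP (a : LTerm) {b : LTerm} (hb : ¬ b.isP) : succNF a b = s a b := by
  cases b with
  | p u v => exact absurd trivial hb
  | _ => rfl

theorem normalForm_of_avoids {t : LTerm} (h : t.Avoids) : t.normalForm = t := by
  induction t with
  | x => rfl
  | p a b ha hb => rw [normalForm, ha h.1, hb h.2]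
  | s a b ha hb => rw [normalForm, ha h.1, hb h.2.1, succNF_of_not_isP a h.2.2]

theorem eqvGen_p {a a' b b' : LTerm} (ha : EqvGen LStep a a') (hb : EqvGen LStep b b') :
    EqvGen LStep (p a b) (p a' b') :=
  (ha.map (f := (p · b)) fun _ _ => LStep.pl b).trans _ _ _
    (hb.map (f := p a') fun _ _ => LStep.pr a')

theorem eqvGen_s {a a' b b' : LTerm} (ha : EqvGen LStep a a') (hb : EqvGen LStep b b') :
    EqvGen LStep (s a b) (s a' b') :=
  (ha.map (f := (s · b)) fun _ _ => LStep.sl b).trans _ _ _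
    (hb.map (f := s a') fun _ _ => LStep.sr a')

theorem eqvGen_succNF (a b : LTerm) : EqvGen LStep (s a b) (succNF a b) := by
  induction b with
  | p u v hu _ =>
    exact (EqvGen.rel _ _ (LStep.base a u v)).symm _ _ |>.trans _ _ _
      (eqvGen_p hu (EqvGen.refl v))
  | _ => exact EqvGen.refl _

theorem eqvGen_normalForm (t : LTerm) : EqvGen LStep t t.normalForm := by
  induction t with
  | x => exact EqvGen.refl _
  | p a b ha hb => exact eqvGen_p ha hb
  | s a b ha hb => exact (eqvGen_s ha hb).trans _ _ _ (eqvGen_succNF _ _)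

theorem normalForm_eq_of_lStep {t u : LTerm} (h : LStep t u) : t.normalForm = u.normalForm := by
  induction h <;> simp only [normalForm, succNF, *]

theorem normalForm_eq_normalForm_iff {t u : LTerm} :
    t.normalForm = u.normalForm ↔ EqvGen LStep t u :=
  ⟨fun h => (eqvGen_normalForm t).trans _ _ _ (h ▸ (eqvGen_normalForm u).symm _ _),
    fun h => Setoid.eqvGen_le (s := Setoid.ker normalForm)
      (fun _ _ => normalForm_eq_of_lStep) h⟩

end LTerm

open LTerm

noncomputable def quotientEquivAvoids (n : ℕ) :
    Quotient (Setoid.comap (Subtype.val : {t : LTerm // t.leaves = n} → LTerm)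
      (EqvGen.setoid LStep)) ≃ {t : LTerm // t.leaves = n ∧ t.Avoids} where
  toFun := Quotient.lift
    (fun t => ⟨t.1.normalForm, (leaves_normalForm t.1).trans t.2, avoids_normalForm t.1⟩)
    (fun _ _ h => Subtype.ext (normalForm_eq_normalForm_iff.2 h))
  invFun t := Quotient.mk _ ⟨t.1, t.2.1⟩
  left_inv := Quotient.ind fun t =>
    Quotient.sound (normalForm_eq_normalForm_iff.1 (normalForm_of_avoids (avoids_normalForm t.1)))
  right_inv t := Subtype.ext (normalForm_of_avoids t.2.2)

theorem LDim_eq_AvoidCount (n : ℕ) : LDim n = AvoidCount n :=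
  Nat.card_congr (quotientEquivAvoids n)

namespace LTerm

instance decidableAvoids : DecidablePred Avoids
  | x => isTrue trivial
  | p a b => haveI := decidableAvoids a; haveI := decidableAvoids b; instDecidableAnd
  | s a b =>
    haveI := decidableAvoids a; haveI := decidableAvoids b
    haveI : Decidable b.isP := by cases b <;> unfold isP <;> infer_instance
    instDecidableAnd

/-- Given `[T₀, …, Tₙ]` with `Tᵢ` the trees with `i + 1` leaves, the trees with `n + 2` leaves. -/
def nextLevel (L : List (List LTerm)) : List LTerm :=
  (List.range L.length).flatMap fun i =>
    (L.getD i []).flatMap fun a => (L.getD (L.length - 1 - i) []).flatMap fun b => [p a b, s a b]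

def levels : ℕ → List (List LTerm)
  | 0 => [[x]]
  | n + 1 => levels n ++ [nextLevel (levels n)]

def level (n : ℕ) : List LTerm := (levels n).getD n []

theorem length_levels (n : ℕ) : (levels n).length = n + 1 := by
  induction n <;> simp [levels, *]

theorem getD_levels {k n : ℕ} (h : k ≤ n) : (levels n).getD k [] = level k := by
  induction n, h using Nat.le_induction with
  | base => rfl
  | succ n hkn ih => rwa [levels, List.getD_append _ _ _ _ (by rw [length_levels]; omega)]

theorem mem_level_succ {n : ℕ} {t : LTerm} :
    t ∈ level (n + 1) ↔ ∃ i ≤ n, ∃ a ∈ level i, ∃ b ∈ level (n - i), t = p a b ∨ t = s a b := by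
  have hlast : level (n + 1) = nextLevel (levels n) := by
    rw [level, levels, List.getD_append_right _ _ _ _ (by rw [length_levels])]
    simp [length_levels]
  simp only [hlast, nextLevel, length_levels, List.mem_flatMap, List.mem_range, List.mem_cons,
    List.not_mem_nil, or_false, Nat.lt_succ_iff, Nat.add_sub_cancel]
  refine exists_congr fun i => and_congr_right fun hi => ?_
  rw [getD_levels hi, getD_levels (Nat.sub_le n i)]

theorem mem_level {n : ℕ} {t : LTerm} : t ∈ level n ↔ t.leaves = n + 1 := by
  induction n using Nat.strong_induction_on generalizing t with
  | _ n ih =>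
    cases n with
    | zero =>
      rw [show level 0 = [x] from rfl, List.mem_singleton]
      cases t with
      | x => exact iff_of_true rfl rfl
      | _ a b =>
        have := a.one_le_leaves; have := b.one_le_leaves
        simp only [leaves, reduceCtorEq, false_iff]
        omega
    | succ n =>
      rw [mem_level_succ]
      constructor
      · rintro ⟨i, hi, a, ha, b, hb, rfl | rfl⟩ <;>
          simp only [leaves, ih i (by omega) |>.1 ha, ih (n - i) (by omega) |>.1 hb] <;> omega
      · intro ht
        cases t with
        | x => simp [leaves] at ht
        | _ a b =>
          simp only [leaves] at ht
          have := a.one_le_leaves; have := b.one_le_leaves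
          exact ⟨a.leaves - 1, by omega, a, (ih _ (by omega)).2 (by omega),
            b, (ih _ (by omega)).2 (by omega), by simp⟩

theorem AvoidCount_succ (n : ℕ) :
    AvoidCount (n + 1) = ((level n).toFinset.filter Avoids).card := by
  rw [AvoidCount, ← Nat.card_eq_finsetCard]
  exact Nat.card_congr <| Equiv.subtypeEquivRight fun t => by simp [mem_level]

end LTerm

set_option maxRecDepth 100000 in
/-- In the free magmatic algebra with two operations `≺, ≻` subject to the single
relation `(x≻y)≺z = x≻(y≺z)` (L-algebras), the dimension of the arity-`n`
component equals the number of bicolored complete binary trees with `n` leaves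
having no right edge from a `≻`-vertex to a `≺`-vertex; for `n = 1,2,3,4,5`
these numbers are `1, 2, 7, 30, 143`. -/
theorem LAlgebra_dimension_eq_avoiding_trees :
    (∀ n : ℕ, LDim n = AvoidCount n) ∧
    AvoidCount 1 = 1 ∧ AvoidCount 2 = 2 ∧ AvoidCount 3 = 7 ∧
    AvoidCount 4 = 30 ∧ AvoidCount 5 = 143 := by
  refine ⟨LDim_eq_AvoidCount, ?_, ?_, ?_, ?_, ?_⟩ <;> rw [AvoidCount_succ] <;> decide
end
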